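/- arXiv:2410.17034 — 9 statements merged into one kernel-verified Lean document; each statement's English description precedes it below -/
import Mathlib

section
/- Every tree T on n vertices with maximum degree Δ contains a family of at least (n-1-Δ)/40 pairwise edge-disjoint switchable pairs of edges. -/
/-- A pair of vertex-disjoint edges `uw`, `vz` of a tree `T` is *switchable* if:
(I) `w` and `z` are both leaves; or (II) `u` and `v` both have degree 2 and share
a common neighbour `c` distinct from `w` and `z`; or (III) `u` and `v` both have
degree 2 and `uv` is an edge of `T`. -/
def Switchable {V : Type*} [Fintype V] (T : SimpleGraph V) [DecidableRel T.Adj]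
    (u w v z : V) : Prop :=
  T.Adj u w ∧ T.Adj v z ∧ u ≠ v ∧ u ≠ z ∧ w ≠ v ∧ w ≠ z ∧
    ((T.degree w = 1 ∧ T.degree z = 1) ∨
     (T.degree u = 2 ∧ T.degree v = 2 ∧ ∃ c, c ≠ w ∧ c ≠ z ∧ T.Adj u c ∧ T.Adj v c) ∨
     (T.degree u = 2 ∧ T.degree v = 2 ∧ T.Adj u v))

/-- The two edges of a switchable pair, as a finset of edges. -/
def pairEdges {V : Type*} [DecidableEq V] (p : V × V × V × V) : Finset (Sym2 V) :=
  {s(p.1, p.2.1), s(p.2.2.1, p.2.2.2)}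

/-!
Only pairs of types (I) and (III) are used. Let `L` be the number of leaves and `p` the largest
number of leaves adjacent to one vertex `u`. The edges not at `u` are leaf edges, edges joining
two vertices of degree 2, and edges at another vertex of degree at least 3; by the handshake lemma
the last kind number at most `3 (L - p)`. Hence `n - 1 - Δ ≤ 4 (L - p) + P`, where `P` counts the
paths `w x y z` with `deg x = deg y = 2`. Such a path shares an edge with at most 8 others, so a
greedy choice keeps `P / 8` edge-disjoint pairs of type (III). Of the leaves whose edge these do
not use, all but `p` can be matched into pairs with distinct neighbours, giving pairs of type (I);
so `n - 1 - Δ ≤ 8 #(I) + 16 #(III)`.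
-/

open Finset

theorem exists_pairwiseDisjoint_subset_card_le_mul {α β : Type*} [DecidableEq α] [DecidableEq β]
    (g : α → Finset β) (K : ℕ) (A : Finset α) (hne : ∀ a ∈ A, (g a).Nonempty)
    (hK : ∀ a ∈ A, #{b ∈ A | ¬Disjoint (g a) (g b)} ≤ K) :
    ∃ S ⊆ A, (S : Set α).PairwiseDisjoint g ∧ #A ≤ K * #S := by
  induction A using Finset.strongInduction with
  | _ A ih =>
  obtain rfl | ⟨a, ha⟩ := A.eq_empty_or_nonempty
  · exact ⟨∅, empty_subset _, by simp, by simp⟩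
  have ha' : ¬Disjoint (g a) (g a) := fun h => (hne a ha).ne_empty (disjoint_self.1 h)
  obtain ⟨S, hSA, hS, hcard⟩ := ih {b ∈ A | Disjoint (g a) (g b)} (filter_ssubset.2 ⟨a, ha, ha'⟩)
    (fun b hb => hne b (mem_filter.1 hb).1)
    (fun b hb => (card_le_card (filter_subset_filter _ (filter_subset _ _))).trans
      (hK b (mem_filter.1 hb).1))
  have haS : a ∉ S := fun h => ha' (mem_filter.1 (hSA h)).2
  refine ⟨insert a S, insert_subset ha (hSA.trans (filter_subset _ _)), ?_, ?_⟩
  · rw [coe_insert]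
    exact hS.insert fun b hb _ => (mem_filter.1 (hSA hb)).2
  · have hsplit := card_filter_add_card_filter_not (s := A) (fun b => Disjoint (g a) (g b))
    rw [card_insert_of_notMem haS, mul_add_one]
    have := hK a ha
    omega

theorem exists_pairwiseDisjoint_pairs_of_card_fiber_le {α β : Type*} [DecidableEq α]
    [DecidableEq β] (f : α → β) (m : ℕ) (s : Finset α) (hm : ∀ b, #{a ∈ s | f a = b} ≤ m) :
    ∃ M : Finset (α × α), (∀ p ∈ M, p.1 ∈ s ∧ p.2 ∈ s ∧ f p.1 ≠ f p.2) ∧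
      (M : Set (α × α)).PairwiseDisjoint (fun p => ({p.1, p.2} : Finset α)) ∧
      #s ≤ 2 * #M + m := by
  induction s using Finset.strongInduction with
  | _ s ih =>
  by_cases hconst : ∃ a ∈ s, ∃ b ∈ s, f a ≠ f b
  · obtain ⟨a, ha, b, hb, hab⟩ := hconst
    have hne : a ≠ b := fun h => hab (congrArg f h)
    set s' := (s.erase a).erase b
    have hs' : s' ⊂ s := (erase_ssubset (mem_erase.2 ⟨hne.symm, hb⟩)).trans (erase_ssubset ha)
    obtain ⟨M, hM, hMdisj, hcard⟩ := ih s' hs'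
      fun c => (card_le_card (filter_subset_filter _ hs'.subset)).trans (hm c)
    have hab' : ∀ p ∈ M, Disjoint ({a, b} : Finset α) {p.1, p.2} := by
      intro p hp
      obtain ⟨h1, h2, -⟩ := hM p hp
      simp only [s', mem_erase] at h1 h2
      simp only [disjoint_insert_left, disjoint_insert_right, mem_insert, mem_singleton,
        disjoint_singleton]
      tauto
    refine ⟨insert (a, b) M, ?_, ?_, ?_⟩
    · simp only [mem_insert, forall_eq_or_imp]
      exact ⟨⟨ha, hb, hab⟩, fun p hp => ⟨hs'.subset (hM p hp).1, hs'.subset (hM p hp).2.1,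
        (hM p hp).2.2⟩⟩
    · rw [coe_insert]
      exact hMdisj.insert fun p hp _ => hab' p hp
    · have hnot : (a, b) ∉ M := fun h => by simpa using hab' _ h
      have : #s' + 2 = #s := by
        rw [card_erase_of_mem (mem_erase.2 ⟨hne.symm, hb⟩), card_erase_of_mem ha]
        have := one_lt_card.2 ⟨a, ha, b, hb, hne⟩
        omega
      rw [card_insert_of_notMem hnot]
      omega
  · push Not at hconst
    refine ⟨∅, by simp, by simp, ?_⟩
    obtain rfl | ⟨a, ha⟩ := s.eq_empty_or_nonempty
    · simp
    · calc #s ≤ #{x ∈ s | f x = f a} := card_le_card fun x hx => mem_filter.2 ⟨hx, hconst x hx a ha⟩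
        _ ≤ 2 * #(∅ : Finset (α × α)) + m := by simpa using hm (f a)

lemma card_filter_sym2_eq_le_two {ι α : Type*} [DecidableEq α] {s : Finset ι} {f : ι → α × α}
    (hf : Set.InjOn f s) (e : Sym2 α) : #{i ∈ s | Sym2.mk.uncurry (f i) = e} ≤ 2 := by
  induction e using Sym2.ind with | h x y => ?_
  refine (card_le_card_of_injOn f (t := {(x, y), (y, x)}) (fun i hi => ?_)
    (hf.mono (filter_subset _ _))).trans card_le_two
  have h : s((f i).1, (f i).2) = s(x, y) := (mem_filter.1 hi).2
  rcases Sym2.eq_iff.1 h with ⟨h1, h2⟩ | ⟨h1, h2⟩ <;> simp [Prod.ext_iff, h1, h2]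

namespace SimpleGraph

variable {V : Type*} {G : SimpleGraph V} {a b c u v x : V}

lemma eq_of_adj_of_degree_le_one [Fintype (G.neighborSet v)] (h : G.degree v ≤ 1)
    (ha : G.Adj v a) (hb : G.Adj v b) : a = b :=
  card_le_one.1 h a (by simpa) b (by simpa)

lemma eq_of_adj_of_degree_le_two [Fintype (G.neighborSet v)] [DecidableEq V]
    (h : G.degree v ≤ 2) (hx : G.Adj v x) (ha : G.Adj v a) (hb : G.Adj v b) (hax : a ≠ x)
    (hbx : b ≠ x) : a = b := by
  have : #((G.neighborFinset v).erase x) ≤ 1 := by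
    rw [card_erase_of_mem (by simpa), card_neighborFinset_eq_degree]
    omega
  exact card_le_one.1 this a (by simp [hax, ha]) b (by simp [hbx, hb])

lemma exists_adj_ne_of_degree_eq_two [Fintype (G.neighborSet v)] [DecidableEq V]
    (h : G.degree v = 2) (hx : G.Adj v x) : ∃ a, G.Adj v a ∧ a ≠ x := by
  have : 0 < #((G.neighborFinset v).erase x) := by
    rw [card_erase_of_mem (by simpa), card_neighborFinset_eq_degree]
    omega
  obtain ⟨a, ha⟩ := card_pos.1 this
  exact ⟨a, by simpa using (mem_erase.1 ha).2, (mem_erase.1 ha).1⟩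

lemma Connected.eq_or_eq_of_adj_of_degree_eq_one [∀ v, Fintype (G.neighborSet v)]
    (hG : G.Connected) (hab : G.Adj a b) (ha : G.degree a = 1) (hb : G.degree b = 1) (c : V) :
    c = a ∨ c = b := by
  by_contra! hc
  obtain ⟨d, -, hd, hd'⟩ := (hG.preconnected a c).some.exists_boundary_dart {a, b}
    (by simp) (by simp [hc.1, hc.2])
  rcases hd with hd | hd
  · exact hd' (Or.inr (eq_of_adj_of_degree_le_one ha.le (hd ▸ d.adj) hab))
  · exact hd' (Or.inl (eq_of_adj_of_degree_le_one hb.le (hd ▸ d.adj) hab.symm))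

lemma Connected.not_adj_of_degree_eq_one [Fintype V] [∀ v, Fintype (G.neighborSet v)]
    (hG : G.Connected) (hV : 2 < Fintype.card V) (ha : G.degree a = 1) (hb : G.degree b = 1) :
    ¬G.Adj a b := by
  classical
  intro hab
  have : (univ : Finset V) ⊆ {a, b} := fun c _ => by
    simpa using hG.eq_or_eq_of_adj_of_degree_eq_one hab ha hb c
  have := (card_le_card this).trans card_le_two
  rw [card_univ] at this
  omega

lemma IsAcyclic.not_adj_of_adj_of_adj (hG : G.IsAcyclic) (hab : G.Adj a b) (hbc : G.Adj b c) :
    ¬G.Adj a c := by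
  intro hac
  have := (hG.subsingleton_path a c).elim ⟨.cons hac .nil, by simp [hac.ne]⟩
    ⟨.cons hab (.cons hbc .nil), by simp [hab.ne, hbc.ne, hac.ne]⟩
  simpa using congrArg (fun p : G.Path a c => p.1.length) this

variable [Fintype V] [DecidableRel G.Adj]

variable (G) in
def leafDarts : Finset (V × V) := {d | G.Adj d.1 d.2 ∧ G.degree d.2 = 1}

@[simp]
lemma mem_leafDarts {d : V × V} : d ∈ G.leafDarts ↔ G.Adj d.1 d.2 ∧ G.degree d.2 = 1 := by
  simp [leafDarts]

lemma card_leafDarts : #G.leafDarts = #{v | G.degree v = 1} := by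
  refine card_nbij (·.2) (fun d hd => by simpa using (mem_leafDarts.1 hd).2) ?_ ?_
  · rintro ⟨u, w⟩ hd ⟨u', w'⟩ hd' (rfl : w = w')
    simp only [mem_coe, mem_leafDarts] at hd hd'
    simp [eq_of_adj_of_degree_le_one hd.2.le hd.1.symm hd'.1.symm]
  · intro w hw
    have hw : G.degree w = 1 := by simpa using hw
    obtain ⟨u, hu⟩ := (G.degree_pos_iff_exists_adj w).1 (by omega)
    exact ⟨(u, w), by simpa using ⟨hu.symm, hw⟩, rfl⟩

lemma card_filter_leafDarts_fst_eq_le_degree [DecidableEq V] (u : V) :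
    #{d ∈ G.leafDarts | d.1 = u} ≤ G.degree u := by
  rw [← card_neighborFinset_eq_degree]
  refine card_le_card_of_injOn (·.2) (fun d hd => ?_) fun d hd d' hd' h => ?_
  · obtain ⟨hleaf, rfl⟩ := mem_filter.1 (mem_coe.1 hd)
    simpa using (mem_leafDarts.1 hleaf).1
  · simp only [coe_filter, mem_leafDarts] at hd hd'
    exact Prod.ext (hd.2.trans hd'.2.symm) h

lemma Connected.injOn_leafDarts (hG : G.Connected) (hV : 2 < Fintype.card V) :
    Set.InjOn Sym2.mk.uncurry (G.leafDarts : Set (V × V)) := by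
  rintro ⟨u, w⟩ hd ⟨u', w'⟩ hd' h
  simp only [mem_coe, mem_leafDarts] at hd hd'
  rcases Sym2.eq_iff.1 (by simpa using h) with ⟨rfl, rfl⟩ | ⟨rfl, rfl⟩
  · rfl
  · exact absurd hd.1 (hG.not_adj_of_degree_eq_one hV hd'.2 hd.2)

lemma Connected.switchable_of_mem_leafDarts (hG : G.Connected) (hV : 2 < Fintype.card V)
    {u w v z : V} (hd : (u, w) ∈ G.leafDarts) (hd' : (v, z) ∈ G.leafDarts) (huv : u ≠ v) :
    Switchable G u w v z := by
  obtain ⟨huw, hw⟩ := mem_leafDarts.1 hd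
  obtain ⟨hvz, hz⟩ := mem_leafDarts.1 hd'
  refine ⟨huw, hvz, huv, ?_, ?_, ?_, .inl ⟨hw, hz⟩⟩
  · rintro rfl
    exact hG.not_adj_of_degree_eq_one hV hz hw huw
  · rintro rfl
    exact hG.not_adj_of_degree_eq_one hV hw hz hvz
  · rintro rfl
    exact huv (eq_of_adj_of_degree_le_one hw.le huw.symm hvz.symm)

-- Truncated subtraction: only vertices of degree at least 3 contribute to the sum.
lemma IsTree.sum_degree_sub_two_add_two [Nontrivial V] (hG : G.IsTree) :
    ∑ v, (G.degree v - 2) + 2 = #{v | G.degree v = 1} := by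
  have hsum : ∑ v, G.degree v + 2 = 2 * Fintype.card V := by
    rw [G.sum_degrees_eq_twice_card_edges, ← hG.card_edgeFinset]
    ring
  have hterm (v : V) : G.degree v + (if G.degree v = 1 then 1 else 0) = G.degree v - 2 + 2 := by
    have := hG.connected.preconnected.degree_pos_of_nontrivial v
    split_ifs <;> omega
  have := sum_congr rfl fun v (_ : v ∈ univ) => hterm v
  rw [sum_add_distrib, sum_add_distrib, ← card_filter, sum_const, card_univ, smul_eq_mul] at this
  omega

variable [DecidableEq V]

variable (G) in
/-- `(u, w, v, z)` encodes the path `w u v z` with `deg u = deg v = 2`, a candidate switchable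
pair of type (III). -/
def degTwoPaths : Finset (V × V × V × V) :=
  {q | G.Adj q.1 q.2.1 ∧ G.Adj q.1 q.2.2.1 ∧ G.Adj q.2.2.1 q.2.2.2 ∧ q.2.1 ≠ q.2.2.1 ∧
    q.2.2.2 ≠ q.1 ∧ G.degree q.1 = 2 ∧ G.degree q.2.2.1 = 2}

@[simp]
lemma mem_degTwoPaths {u w v z : V} :
    (u, w, v, z) ∈ G.degTwoPaths ↔ G.Adj u w ∧ G.Adj u v ∧ G.Adj v z ∧ w ≠ v ∧ z ≠ u ∧
      G.degree u = 2 ∧ G.degree v = 2 := by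
  simp [degTwoPaths]

lemma IsAcyclic.switchable_of_mem_degTwoPaths (hG : G.IsAcyclic) {u w v z : V}
    (hq : (u, w, v, z) ∈ G.degTwoPaths) : Switchable G u w v z := by
  obtain ⟨huw, huv, hvz, hwv, hzu, hu, hv⟩ := mem_degTwoPaths.1 hq
  refine ⟨huw, hvz, huv.ne, hzu.symm, hwv, ?_, .inr (.inr ⟨hu, hv, huv⟩)⟩
  rintro rfl
  exact hG.not_adj_of_adj_of_adj huw.symm huv hvz.symm

lemma injOn_degTwoPaths_fst :
    Set.InjOn (fun q : V × V × V × V => (q.1, q.2.1)) G.degTwoPaths := by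
  rintro ⟨u, w, v, z⟩ hq ⟨u', w', v', z'⟩ hq' h
  obtain ⟨huw, huv, hvz, hwv, hzu, hu, hv⟩ := mem_degTwoPaths.1 hq
  obtain ⟨rfl, rfl⟩ := Prod.mk.inj h
  obtain ⟨-, huv', hvz', hwv', hzu', -, -⟩ := mem_degTwoPaths.1 hq'
  obtain rfl := eq_of_adj_of_degree_le_two hu.le huw huv huv' hwv.symm hwv'.symm
  obtain rfl := eq_of_adj_of_degree_le_two hv.le huv.symm hvz hvz' hzu hzu'
  rfl

lemma injOn_degTwoPaths_snd :
    Set.InjOn (fun q : V × V × V × V => (q.2.2.1, q.2.2.2)) G.degTwoPaths := by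
  rintro ⟨u, w, v, z⟩ hq ⟨u', w', v', z'⟩ hq' h
  obtain ⟨huw, huv, hvz, hwv, hzu, hu, hv⟩ := mem_degTwoPaths.1 hq
  obtain ⟨rfl, rfl⟩ := Prod.mk.inj h
  obtain ⟨huw', huv', -, hwv', hzu', -, -⟩ := mem_degTwoPaths.1 hq'
  obtain rfl := eq_of_adj_of_degree_le_two hv.le hvz huv.symm huv'.symm hzu.symm hzu'.symm
  obtain rfl := eq_of_adj_of_degree_le_two hu.le huv huw huw' hwv hwv'
  rfl

lemma card_filter_mem_pairEdges_degTwoPaths_le (e : Sym2 V) :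
    #{q ∈ G.degTwoPaths | e ∈ pairEdges q} ≤ 4 := by
  have hsub : {q ∈ G.degTwoPaths | e ∈ pairEdges q} ⊆
      {q ∈ G.degTwoPaths | Sym2.mk.uncurry (q.1, q.2.1) = e} ∪
        {q ∈ G.degTwoPaths | Sym2.mk.uncurry (q.2.2.1, q.2.2.2) = e} := by
    intro q hq
    simp only [mem_filter, pairEdges, mem_insert, mem_singleton] at hq
    simp only [mem_union, Function.uncurry_apply_pair]
    rcases hq with ⟨hq, he | he⟩ <;> simp [hq, he]
  calc _ ≤ _ := card_le_card hsub
    _ ≤ 2 + 2 := (card_union_le _ _).trans <| add_le_add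
        (card_filter_sym2_eq_le_two injOn_degTwoPaths_fst e)
        (card_filter_sym2_eq_le_two injOn_degTwoPaths_snd e)

lemma card_filter_not_disjoint_pairEdges_degTwoPaths_le (q : V × V × V × V) :
    #{q' ∈ G.degTwoPaths | ¬Disjoint (pairEdges q) (pairEdges q')} ≤ 8 := by
  have hsub : {q' ∈ G.degTwoPaths | ¬Disjoint (pairEdges q) (pairEdges q')} ⊆
      (pairEdges q).biUnion fun e => {q' ∈ G.degTwoPaths | e ∈ pairEdges q'} := by
    intro q' hq'
    obtain ⟨hq', hnd⟩ := mem_filter.1 hq'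
    obtain ⟨e, he, he'⟩ := not_disjoint_iff.1 hnd
    exact mem_biUnion.2 ⟨e, he, mem_filter.2 ⟨hq', he'⟩⟩
  calc _ ≤ ∑ e ∈ pairEdges q, #{q' ∈ G.degTwoPaths | e ∈ pairEdges q'} :=
        (card_le_card hsub).trans card_biUnion_le
    _ ≤ #(pairEdges q) * 4 := sum_le_card_nsmul _ _ _ fun e _ =>
        card_filter_mem_pairEdges_degTwoPaths_le e
    _ ≤ 2 * 4 := Nat.mul_le_mul_right _ card_le_two

lemma card_filter_degree_eq_two_le_card_degTwoPaths :
    #{e ∈ G.edgeFinset | ∀ a ∈ e, G.degree a = 2} ≤ #G.degTwoPaths := by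
  refine card_le_card_of_surjOn (fun q => s(q.1, q.2.2.1)) fun e he => ?_
  induction e using Sym2.ind with | h u v => ?_
  simp only [coe_filter, mem_edgeFinset, Set.mem_ofPred_eq, mem_edgeSet, Sym2.mem_iff,
    forall_eq_or_imp, forall_eq] at he
  obtain ⟨huv, hu, hv⟩ := he
  obtain ⟨w, huw, hwv⟩ := exists_adj_ne_of_degree_eq_two hu huv
  obtain ⟨z, hvz, hzu⟩ := exists_adj_ne_of_degree_eq_two hv huv.symm
  exact ⟨(u, w, v, z), by simpa using ⟨huw, huv, hvz, hwv, hzu, hu, hv⟩, rfl⟩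

lemma card_edgeFinset_le (u : V) :
    #G.edgeFinset ≤ G.degree u + #{d ∈ G.leafDarts | d.1 ≠ u} +
      #{e ∈ G.edgeFinset | ∀ a ∈ e, G.degree a = 2} +
      ∑ v ∈ {v | v ≠ u ∧ 3 ≤ G.degree v}, G.degree v := by
  have hcover : G.edgeFinset ⊆ G.incidenceFinset u ∪
      {d ∈ G.leafDarts | d.1 ≠ u}.image Sym2.mk.uncurry ∪
      {e ∈ G.edgeFinset | ∀ a ∈ e, G.degree a = 2} ∪
      ({v | v ≠ u ∧ 3 ≤ G.degree v} : Finset V).biUnion (G.incidenceFinset ·) := by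
    intro e he
    induction e using Sym2.ind with | h a b => ?_
    have hab : G.Adj a b := by simpa using he
    simp only [mem_union, mem_image, mem_filter, mem_leafDarts, mem_biUnion, mem_univ, true_and,
      Prod.exists, Function.uncurry_apply_pair, Sym2.mem_iff, forall_eq_or_imp, forall_eq]
    by_cases hu : u = a ∨ u = b
    · rcases hu with rfl | rfl
      · simp [hab]
      · simp [hab.symm, Sym2.eq_swap]
    push Not at hu
    by_cases ha : G.degree a = 1
    · exact .inl (.inl (.inr ⟨b, a, ⟨⟨hab.symm, ha⟩, hu.2.symm⟩, Sym2.eq_swap⟩))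
    by_cases hb : G.degree b = 1
    · exact .inl (.inl (.inr ⟨a, b, ⟨⟨hab, hb⟩, hu.1.symm⟩, rfl⟩))
    by_cases h2 : G.degree a = 2 ∧ G.degree b = 2
    · exact .inl (.inr ⟨he, h2⟩)
    have := hab.degree_pos_left
    have := hab.degree_pos_right
    by_cases ha3 : 3 ≤ G.degree a
    · exact .inr ⟨a, ⟨hu.1.symm, ha3⟩, by simp [hab]⟩
    · exact .inr ⟨b, ⟨hu.2.symm, by omega⟩, by rw [Sym2.eq_swap]; simp [hab.symm]⟩
  grw [card_le_card hcover, card_union_le, card_union_le, card_union_le, card_image_le,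
    card_biUnion_le]
  simp only [card_incidenceFinset_eq_degree, le_refl]

lemma IsTree.sum_degree_add_three_mul_degree_le [Nontrivial V] (hG : G.IsTree) (u : V) :
    ∑ v ∈ {v | v ≠ u ∧ 3 ≤ G.degree v}, G.degree v + 3 * G.degree u ≤
      3 * #{v | G.degree v = 1} := by
  have hsum := hG.sum_degree_sub_two_add_two
  rw [← add_sum_erase _ _ (mem_univ u)] at hsum
  have hle : ∑ v ∈ {v | v ≠ u ∧ 3 ≤ G.degree v}, G.degree v ≤
      3 * ∑ v ∈ univ.erase u, (G.degree v - 2) := by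
    rw [mul_sum]
    calc _ ≤ ∑ v ∈ {v | v ≠ u ∧ 3 ≤ G.degree v}, 3 * (G.degree v - 2) :=
          sum_le_sum fun v hv => by have := (mem_filter.1 hv).2.2; omega
      _ ≤ _ := sum_le_sum_of_subset fun v hv => by simpa using (mem_filter.1 hv).2.1
  have := hG.connected.preconnected.degree_pos_of_nontrivial u
  omega

lemma IsTree.card_add_le [Nontrivial V] (hG : G.IsTree) (u : V) :
    Fintype.card V + 2 * G.degree u + #{d ∈ G.leafDarts | d.1 = u} ≤
      4 * #G.leafDarts + #G.degTwoPaths + 1 := by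
  have := G.card_edgeFinset_le u
  have := card_filter_add_card_filter_not (s := G.leafDarts) (·.1 = u)
  simp only [← ne_eq] at this
  have := hG.card_edgeFinset
  have := hG.sum_degree_add_three_mul_degree_le u
  have := G.card_filter_degree_eq_two_le_card_degTwoPaths
  rw [← card_leafDarts] at *
  omega

variable (G) in
def IsFreeFamily (S : Finset (V × V × V × V)) : Prop :=
  (∀ q ∈ S, Switchable G q.1 q.2.1 q.2.2.1 q.2.2.2) ∧
    (S : Set (V × V × V × V)).PairwiseDisjoint pairEdges

lemma IsFreeFamily.union {S S' : Finset (V × V × V × V)} (hS : G.IsFreeFamily S)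
    (hS' : G.IsFreeFamily S') (h : ∀ q ∈ S, ∀ q' ∈ S', Disjoint (pairEdges q) (pairEdges q')) :
    G.IsFreeFamily (S ∪ S') := by
  refine ⟨fun q hq => (mem_union.1 hq).elim (hS.1 q) (hS'.1 q), ?_⟩
  rw [coe_union]
  exact hS.2.union hS'.2 fun q hq q' hq' _ => h q hq q' hq'

lemma IsAcyclic.exists_isFreeFamily_card_degTwoPaths_le (hG : G.IsAcyclic) :
    ∃ S, G.IsFreeFamily S ∧ #G.degTwoPaths ≤ 8 * #S := by
  obtain ⟨S, hS, hdisj, hcard⟩ := exists_pairwiseDisjoint_subset_card_le_mul pairEdges 8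
    G.degTwoPaths (fun _ _ => insert_nonempty _ _)
    (fun q _ => card_filter_not_disjoint_pairEdges_degTwoPaths_le q)
  exact ⟨S, ⟨fun _ hq => hG.switchable_of_mem_degTwoPaths (hS hq), hdisj⟩, hcard⟩

lemma Connected.isFreeFamily_map_prodAssoc (hG : G.Connected) (hV : 2 < Fintype.card V)
    {M : Finset ((V × V) × V × V)}
    (hM : ∀ p ∈ M, p.1 ∈ G.leafDarts ∧ p.2 ∈ G.leafDarts ∧ p.1.1 ≠ p.2.1)
    (hMdisj : (M : Set ((V × V) × V × V)).PairwiseDisjoint fun p => ({p.1, p.2} : Finset (V × V))) :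
    G.IsFreeFamily (M.map (Equiv.prodAssoc V V (V × V)).toEmbedding) := by
  refine ⟨?_, ?_⟩
  · simp only [forall_mem_map]
    rintro ⟨⟨u, w⟩, ⟨v, z⟩⟩ hp
    obtain ⟨h1, h2, huv⟩ := hM _ hp
    exact hG.switchable_of_mem_leafDarts hV h1 h2 huv
  · rw [coe_map, Equiv.coe_toEmbedding, (Equiv.injective _).injOn.pairwiseDisjoint_image]
    have hsub (p) (hp : p ∈ M) : (({p.1, p.2} : Finset (V × V)) : Set (V × V)) ⊆ G.leafDarts := by
      obtain ⟨h1, h2, -⟩ := hM p hp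
      simp [Set.insert_subset_iff, h1, h2]
    have hpair (p : (V × V) × V × V) : pairEdges (Equiv.prodAssoc V V (V × V) p) =
        ({p.1, p.2} : Finset (V × V)).image Sym2.mk.uncurry := by
      rw [image_insert, image_singleton]
      rfl
    intro p hp p' hp' hne
    rw [Function.onFun, Function.comp_apply, Function.comp_apply, hpair, hpair, ← disjoint_coe,
      coe_image, coe_image]
    exact (disjoint_coe.2 (hMdisj hp hp' hne)).image (hG.injOn_leafDarts hV) (hsub p hp)
      (hsub p' hp')

lemma Connected.exists_isFreeFamily_card_leafDarts_le (hG : G.Connected)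
    (hV : 2 < Fintype.card V) (F : Finset (Sym2 V)) {m : ℕ}
    (hm : ∀ u, #{d ∈ G.leafDarts | d.1 = u} ≤ m) :
    ∃ S, G.IsFreeFamily S ∧ (∀ q ∈ S, Disjoint (pairEdges q) F) ∧
      #G.leafDarts ≤ 2 * #S + m + #F := by
  set W := {d ∈ G.leafDarts | Sym2.mk.uncurry d ∉ F}
  have hW : #G.leafDarts ≤ #W + #F := by
    have : #W + #{d ∈ G.leafDarts | ¬Sym2.mk.uncurry d ∉ F} = #G.leafDarts :=
      card_filter_add_card_filter_not _
    have : #{d ∈ G.leafDarts | ¬Sym2.mk.uncurry d ∉ F} ≤ #F :=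
      card_le_card_of_injOn _ (fun d hd => by simpa using (mem_filter.1 hd).2)
        ((hG.injOn_leafDarts hV).mono (filter_subset _ _))
    omega
  obtain ⟨M, hM, hMdisj, hcard⟩ := exists_pairwiseDisjoint_pairs_of_card_fiber_le Prod.fst m W
    fun u => (card_le_card (filter_subset_filter _ (filter_subset _ _))).trans (hm u)
  have hMW (p) (hp : p ∈ M) : p.1 ∈ W ∧ p.2 ∈ W := ⟨(hM p hp).1, (hM p hp).2.1⟩
  refine ⟨_, hG.isFreeFamily_map_prodAssoc hV (fun p hp => ⟨(mem_filter.1 (hMW p hp).1).1,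
    (mem_filter.1 (hMW p hp).2).1, (hM p hp).2.2⟩) hMdisj, ?_, ?_⟩
  · simp only [forall_mem_map]
    intro p hp
    simpa [pairEdges] using ⟨(mem_filter.1 (hMW p hp).1).2, (mem_filter.1 (hMW p hp).2).2⟩
  · rw [card_map]
    omega

end SimpleGraph

/-- Every tree `T` on `n` vertices with maximum degree `Δ` contains a free family
(pairwise edge-disjoint collection) of at least `(n - 1 - Δ)/40` switchable pairs. -/
theorem stmt3 (n Δ : ℕ) (T : SimpleGraph (Fin n)) [DecidableRel T.Adj]
    (hT : T.IsTree) (hmax : ∀ v, T.degree v ≤ Δ) :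
    ∃ S : Finset (Fin n × Fin n × Fin n × Fin n),
      (∀ p ∈ S, Switchable T p.1 p.2.1 p.2.2.1 p.2.2.2) ∧
      (∀ p ∈ S, ∀ q ∈ S, p ≠ q → Disjoint (pairEdges p) (pairEdges q)) ∧
      n - 1 - Δ ≤ 40 * S.card := by
  rcases le_or_gt n (Δ + 1) with hsmall | hbig
  · exact ⟨∅, by simp, by simp, by simp; omega⟩
  have : Nontrivial (Fin n) := Fin.nontrivial_iff_two_le.2 (by omega)
  have hΔ : 0 < Δ :=
    (hT.connected.preconnected.degree_pos_of_nontrivial ⟨0, by omega⟩).trans_le (hmax _)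
  have hV : 2 < Fintype.card (Fin n) := by rw [Fintype.card_fin]; omega
  obtain ⟨u, -, hu⟩ := exists_max_image univ (fun u : Fin n => #{d ∈ T.leafDarts | d.1 = u})
    univ_nonempty
  obtain ⟨S₃, hS₃, hcard₃⟩ := hT.isAcyclic.exists_isFreeFamily_card_degTwoPaths_le
  obtain ⟨S₁, hS₁, hF, hcard₁⟩ := hT.connected.exists_isFreeFamily_card_leafDarts_le hV
    (S₃.biUnion pairEdges) fun v => hu v (mem_univ v)
  have hS₁₃ (q) (hq : q ∈ S₁) (q') (hq' : q' ∈ S₃) : Disjoint (pairEdges q) (pairEdges q') :=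
    (hF q hq).mono_right (subset_biUnion_of_mem pairEdges hq')
  have hcardF : #(S₃.biUnion pairEdges) ≤ 2 * #S₃ :=
    card_biUnion_le.trans ((sum_le_card_nsmul _ _ 2 fun _ _ => card_le_two).trans_eq (mul_comm _ _))
  have hcard : #(S₁ ∪ S₃) = #S₁ + #S₃ :=
    card_union_of_disjoint <| disjoint_left.2 fun q hq hq' => by
      simpa [pairEdges] using hS₁₃ q hq q hq'
  obtain ⟨hsw, hdisj⟩ := hS₁.union hS₃ hS₁₃
  refine ⟨S₁ ∪ S₃, hsw, fun p hp q hq hpq => hdisj hp hq hpq, ?_⟩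
  have := hT.card_add_le u
  have := SimpleGraph.card_filter_leafDarts_fst_eq_le_degree (G := T) u
  have := hmax u
  rw [Fintype.card_fin] at *
  omega
end

section
/- For a switchable pair of edges uw, vz in a tree T (of type I, II, or III), the graph obtained from T by deleting the edges uw and vz and adding the edges uz and vw is a tree isomorphic to T. -/
open Function

namespace Sym2

variable {α : Type*} [DecidableEq α]

lemma map_swap_eq_self {a b : α} {e : Sym2 α} (ha : a ∉ e) (hb : b ∉ e) :
    e.map (Equiv.swap a b) = e := by
  induction e using Sym2.ind with
  | _ x y =>
    simp only [mem_iff, not_or] at ha hb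
    rw [map_mk, Equiv.swap_apply_of_ne_of_ne (Ne.symm ha.1) (Ne.symm hb.1),
      Equiv.swap_apply_of_ne_of_ne (Ne.symm ha.2) (Ne.symm hb.2)]

end Sym2

namespace SimpleGraph

variable {V : Type*} {G : SimpleGraph V}

lemma fromEdgeSet_image_edgeSet {W : Type*} (f : V ≃ W) :
    fromEdgeSet (Sym2.map f '' G.edgeSet) = G.map f :=
  calc fromEdgeSet (Sym2.map f '' G.edgeSet) = fromEdgeSet (G.map f.toEmbedding).edgeSet := by
        rw [edgeSet_map]; rfl
    _ = G.map f := fromEdgeSet_edgeSet _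

lemma image_edgeSet_eq_of_mapsTo {f : V → V} (hf : Involutive f) {e₁ e₂ : Sym2 V}
    (h₁ : e₁ ∈ G.edgeSet) (h₂ : e₂ ∈ G.edgeSet)
    (hmaps : Set.MapsTo (Sym2.map f) (G.edgeSet \ {e₁, e₂}) (G.edgeSet \ {e₁, e₂})) :
    Sym2.map f '' G.edgeSet = (G.edgeSet \ {e₁, e₂}) ∪ {e₁.map f, e₂.map f} := by
  have hfix : Sym2.map f '' (G.edgeSet \ {e₁, e₂}) = G.edgeSet \ {e₁, e₂} :=
    hmaps.image_subset.antisymm fun e he ↦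
      ⟨e.map f, hmaps he, by rw [Sym2.map_map, hf.comp_self, Sym2.map_id, id]⟩
  have hsub : {e₁, e₂} ⊆ G.edgeSet := Set.insert_subset h₁ (Set.singleton_subset_iff.2 h₂)
  conv_lhs => rw [← Set.sdiff_union_of_subset hsub]
  rw [Set.image_union, hfix, Set.image_pair]

lemma eq_of_adj_of_degree_eq_one [Fintype V] [DecidableRel G.Adj] {w u x : V}
    (h : G.degree w = 1) (hu : G.Adj w u) (hx : G.Adj w x) : x = u :=
  Finset.card_le_one.mp h.le x (by simpa using hx) u (by simpa using hu)

lemma eq_of_adj_of_degree_eq_two [Fintype V] [DecidableEq V] [DecidableRel G.Adj] {u w p x : V}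
    (h : G.degree u = 2) (hw : G.Adj u w) (hp : G.Adj u p) (hpw : p ≠ w)
    (hx : G.Adj u x) (hxw : x ≠ w) : x = p := by
  have : ((G.neighborFinset u).erase w).card ≤ 1 := by
    rw [Finset.card_erase_of_mem (by simpa using hw), card_neighborFinset_eq_degree, h]
  exact Finset.card_le_one.mp this x (by simp [hxw, hx]) p (by simp [hpw, hp])

variable [DecidableEq V]

lemma mapsTo_swap_of_degree_eq_one [Fintype V] [DecidableRel G.Adj] {u w v z : V}
    (hw : G.degree w = 1) (hz : G.degree z = 1) (huw : G.Adj u w) (hvz : G.Adj v z) :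
    Set.MapsTo (Sym2.map (Equiv.swap w z)) (G.edgeSet \ {s(u, w), s(v, z)})
      (G.edgeSet \ {s(u, w), s(v, z)}) := by
  rintro e ⟨he, hne⟩
  simp only [Set.mem_insert_iff, Set.mem_singleton_iff, not_or] at hne
  have hleaf : ∀ {a b : V}, G.degree a = 1 → G.Adj b a → a ∉ e ∨ e = s(b, a) := by
    intro a b ha hab
    refine or_iff_not_imp_left.2 fun hae ↦ ?_
    obtain ⟨x, rfl⟩ := Sym2.mem_iff_exists.1 (not_not.1 hae)
    rw [eq_of_adj_of_degree_eq_one ha hab.symm (G.mem_edgeSet.1 he), Sym2.eq_swap]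
  rw [Sym2.map_swap_eq_self ((hleaf hw huw).resolve_right hne.1)
    ((hleaf hz hvz).resolve_right hne.2)]
  exact ⟨he, by simpa using hne⟩

lemma map_swap_mem_of_left_mem [Fintype V] [DecidableRel G.Adj] {u w v z p q : V}
    (hu : G.degree u = 2) (huw : G.Adj u w) (hup : G.Adj u p) (hpw : p ≠ w)
    (hvq : G.Adj v q) (hqz : q ≠ z) (hpq : Equiv.swap u v p = q) (hvw : v ≠ w) (huv : u ≠ v)
    {e : Sym2 V} (he : e ∈ G.edgeSet \ {s(u, w), s(v, z)}) (hue : u ∈ e) :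
    e.map (Equiv.swap u v) ∈ G.edgeSet \ {s(u, w), s(v, z)} := by
  obtain ⟨he, hne⟩ := he
  simp only [Set.mem_insert_iff, Set.mem_singleton_iff, not_or] at hne
  obtain ⟨x, rfl⟩ := Sym2.mem_iff_exists.1 hue
  have hx : x = p := eq_of_adj_of_degree_eq_two hu huw hup hpw (G.mem_edgeSet.1 he)
    fun h ↦ hne.1 (by rw [h])
  subst hx
  rw [Sym2.map_mk, Equiv.swap_apply_left, hpq]
  refine ⟨hvq, ?_⟩
  simp [huv.symm, hvw, hqz, hvq.ne.symm]

lemma mapsTo_swap_of_degree_eq_two [Fintype V] [DecidableRel G.Adj] {u w v z p q : V}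
    (hu : G.degree u = 2) (hv : G.degree v = 2) (huw : G.Adj u w) (hvz : G.Adj v z)
    (hup : G.Adj u p) (hvq : G.Adj v q) (hpw : p ≠ w) (hqz : q ≠ z)
    (hpq : Equiv.swap u v p = q) (huv : u ≠ v) (huz : u ≠ z) (hvw : v ≠ w) :
    Set.MapsTo (Sym2.map (Equiv.swap u v)) (G.edgeSet \ {s(u, w), s(v, z)})
      (G.edgeSet \ {s(u, w), s(v, z)}) := by
  intro e he
  by_cases hue : u ∈ e
  · exact map_swap_mem_of_left_mem hu huw hup hpw hvq hqz hpq hvw huv he hue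
  by_cases hve : v ∈ e
  · have hqp : Equiv.swap v u q = p := by rw [Equiv.swap_comm, ← hpq, Equiv.swap_apply_self]
    rw [Set.pair_comm] at he ⊢
    rw [Equiv.swap_comm]
    exact map_swap_mem_of_left_mem hv hvz hvq hqz hup hpw hqp huz huv.symm he hve
  · rwa [Sym2.map_swap_eq_self hue hve]

end SimpleGraph

open SimpleGraph

theorem Switchable.exists_perm_image_edgeSet {V : Type*} [Fintype V] [DecidableEq V]
    {T : SimpleGraph V} [DecidableRel T.Adj] {u w v z : V} (h : Switchable T u w v z) :
    ∃ σ : Equiv.Perm V,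
      Sym2.map σ '' T.edgeSet = (T.edgeSet \ {s(u, w), s(v, z)}) ∪ {s(u, z), s(v, w)} := by
  obtain ⟨huw, hvz, huv, huz, hwv, -, hcase⟩ := h
  have h₁ := T.mem_edgeSet.2 huw
  have h₂ := T.mem_edgeSet.2 hvz
  rcases hcase with ⟨hw, hz⟩ | hdeg
  · refine ⟨Equiv.swap w z, ?_⟩
    rw [image_edgeSet_eq_of_mapsTo (Equiv.swap_apply_self w z) h₁ h₂
      (mapsTo_swap_of_degree_eq_one hw hz huw hvz), Sym2.map_mk, Sym2.map_mk,
      Equiv.swap_apply_of_ne_of_ne huw.ne huz, Equiv.swap_apply_left,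
      Equiv.swap_apply_of_ne_of_ne hwv.symm hvz.ne, Equiv.swap_apply_right]
  · -- `p`, `q` are the second neighbours of `u`, `v`: `c, c` in type II and `v, u` in type III
    obtain ⟨hu, hv, p, q, hup, hvq, hpw, hqz, hpq⟩ : T.degree u = 2 ∧ T.degree v = 2 ∧
        ∃ p q, T.Adj u p ∧ T.Adj v q ∧ p ≠ w ∧ q ≠ z ∧ Equiv.swap u v p = q := by
      rcases hdeg with ⟨hu, hv, c, hcw, hcz, huc, hvc⟩ | ⟨hu, hv, huv'⟩
      · exact ⟨hu, hv, c, c, huc, hvc, hcw, hcz,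
          Equiv.swap_apply_of_ne_of_ne huc.ne.symm hvc.ne.symm⟩
      · exact ⟨hu, hv, v, u, huv', huv'.symm, hwv.symm, huz, Equiv.swap_apply_right u v⟩
    refine ⟨Equiv.swap u v, ?_⟩
    rw [image_edgeSet_eq_of_mapsTo (Equiv.swap_apply_self u v) h₁ h₂
      (mapsTo_swap_of_degree_eq_two hu hv huw hvz hup hvq hpw hqz hpq huv huz hwv.symm),
      Sym2.map_mk, Sym2.map_mk, Equiv.swap_apply_left, Equiv.swap_apply_right,
      Equiv.swap_apply_of_ne_of_ne huw.ne.symm hwv,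
      Equiv.swap_apply_of_ne_of_ne huz.symm hvz.ne.symm, Set.pair_comm s(v, w)]

/-- For a switchable pair of edges `uw`, `vz` in a tree `T`, deleting `uw` and `vz`
and adding `uz` and `vw` yields a tree isomorphic to `T`. -/
theorem stmt4 {V : Type*} [Fintype V] [DecidableEq V] (T : SimpleGraph V)
    [DecidableRel T.Adj] (hT : T.IsTree) (u w v z : V)
    (hsw : Switchable T u w v z) :
    (SimpleGraph.fromEdgeSet
        ((T.edgeSet \ {s(u, w), s(v, z)}) ∪ {s(u, z), s(v, w)})).IsTree ∧
    Nonempty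
      (T ≃g SimpleGraph.fromEdgeSet
        ((T.edgeSet \ {s(u, w), s(v, z)}) ∪ {s(u, z), s(v, w)})) := by
  obtain ⟨σ, hσ⟩ := hsw.exists_perm_image_edgeSet
  rw [← hσ, fromEdgeSet_image_edgeSet]
  exact ⟨(Iso.map σ T).isTree_iff.mp hT, ⟨Iso.map σ T⟩⟩
end

section
/- Let n = 4m+6 and partition the vertices of K_n into V_1 of size 2m+1 and V_2 of size 2m+5. Colour edges between V_1 and V_2 red (-1) and all other edges blue (+1). Then, for every Hamilton cycle H of K_n, the sum of edge colours of H is congruent to 2 modulo 4. -/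
/-!
Give each vertex the sign `g v = -1` on `V1` and `+1` on `V2`; then the colour of an edge
`uv` is `g u * g v`. Along a closed walk these products telescope to `g a ^ 2 = 1`, so an even
number of edges is coloured `-1`. A list of `k` signs `-1` and `L - k` signs `+1` sums to
`L - 2k`, which is `L` modulo `4` when `k` is even; a Hamilton cycle has `L = 4m + 6` edges.
-/

lemma List.sum_map_units_modEq (l : List ℤˣ) :
    (l.map ((↑) : ℤˣ → ℤ)).sum ≡ l.length - 1 + l.prod [ZMOD 4] := by
  induction l with
  | nil => rfl
  | cons x l ih =>
    simp only [List.map_cons, List.sum_cons, List.length_cons, List.prod_cons, Units.val_mul]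
    rcases Int.units_eq_one_or x with rfl | rfl <;>
      rcases Int.units_eq_one_or l.prod with hp | hp <;>
      simp only [hp, Int.ModEq] at ih ⊢ <;> push_cast at ih ⊢ <;> omega

namespace SimpleGraph

variable {V : Type*} {G : SimpleGraph V}

def edgeSign (g : V → ℤˣ) : Sym2 V → ℤˣ :=
  Sym2.lift ⟨fun u v => g u * g v, fun _ _ => mul_comm _ _⟩

@[simp]
lemma edgeSign_mk (g : V → ℤˣ) (u v : V) : edgeSign g s(u, v) = g u * g v := rfl

lemma Walk.prod_edges_map_edgeSign (g : V → ℤˣ) {a b : V} (p : G.Walk a b) :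
    (p.edges.map (edgeSign g)).prod = g a * g b := by
  induction p with
  | nil => exact (Int.units_mul_self _).symm
  | @cons u v w _ p ih =>
    rw [Walk.edges_cons, List.map_cons, List.prod_cons, ih, edgeSign_mk,
      mul_assoc, ← mul_assoc (g v), Int.units_mul_self, one_mul]

lemma Walk.sum_edges_map_modEq_length (g : V → ℤˣ) (c : Sym2 V → ℤ)
    (hc : ∀ u v, G.Adj u v → c s(u, v) = g u * g v) {a : V} (p : G.Walk a a) :
    (p.edges.map c).sum ≡ p.length [ZMOD 4] := by
  have hmap : p.edges.map c = (p.edges.map (edgeSign g)).map (↑) := by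
    rw [List.map_map]
    refine List.map_congr_left fun e he => ?_
    induction e using Sym2.ind with
    | h u v => exact hc u v (p.edges_subset_edgeSet he)
  rw [hmap, ← Walk.length_edges]
  simpa [Walk.prod_edges_map_edgeSign, Int.units_mul_self] using
    List.sum_map_units_modEq (p.edges.map (edgeSign g))

end SimpleGraph

theorem stmt8_general (m : ℕ) (V1 V2 : Finset (Fin (4 * m + 6)))
    (hdisj : Disjoint V1 V2) (hcover : V1 ∪ V2 = Finset.univ)
    (c : Sym2 (Fin (4 * m + 6)) → ℤ)
    (hc : ∀ u v : Fin (4 * m + 6), u ≠ v →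
      c s(u, v) = if (u ∈ V1 ∧ v ∈ V2) ∨ (u ∈ V2 ∧ v ∈ V1) then -1 else 1) :
    ∀ (a : Fin (4 * m + 6)) (w : (⊤ : SimpleGraph (Fin (4 * m + 6))).Walk a a),
      w.IsHamiltonianCycle → (w.edges.map c).sum % 4 = 2 := by
  intro a w hw
  have hV2 : ∀ v, v ∈ V2 ↔ v ∉ V1 := fun v =>
    ⟨fun h2 h1 => Finset.disjoint_left.mp hdisj h1 h2, fun h1 => by
      simpa [h1] using hcover.ge (Finset.mem_univ v)⟩
  let g : Fin (4 * m + 6) → ℤˣ := fun v => if v ∈ V1 then -1 else 1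
  have hcg : ∀ u v, (⊤ : SimpleGraph _).Adj u v → c s(u, v) = g u * g v := by
    intro u v huv
    rw [hc u v huv]
    by_cases hu : u ∈ V1 <;> by_cases hv : v ∈ V1 <;> simp [g, hV2, hu, hv]
  have hmod := w.sum_edges_map_modEq_length g c hcg
  rw [hw.length_eq, Fintype.card_fin] at hmod
  unfold Int.ModEq at hmod
  omega

/-- With `K_{4m+6}` partitioned into `V₁` of size `2m+1` and `V₂` of size `2m+5`,
crossing edges coloured `-1` and all other edges `+1`, the colour sum of every
Hamilton cycle is congruent to `2` modulo `4`. -/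
theorem stmt8 (m : ℕ) (V1 V2 : Finset (Fin (4 * m + 6)))
    (hdisj : Disjoint V1 V2) (hcover : V1 ∪ V2 = Finset.univ)
    (h1 : V1.card = 2 * m + 1) (h2 : V2.card = 2 * m + 5)
    (c : Sym2 (Fin (4 * m + 6)) → ℤ)
    (hc : ∀ u v : Fin (4 * m + 6), u ≠ v →
      c s(u, v) = if (u ∈ V1 ∧ v ∈ V2) ∨ (u ∈ V2 ∧ v ∈ V1) then -1 else 1) :
    ∀ (a : Fin (4 * m + 6)) (w : (⊤ : SimpleGraph (Fin (4 * m + 6))).Walk a a),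
      w.IsHamiltonianCycle → (w.edges.map c).sum % 4 = 2 :=
  stmt8_general m V1 V2 hdisj hcover c hc
end

section
/- Let n = 16k^2 with k odd, partition V(K_n) into V_1 of size 8k^2-2k and V_2 of size 8k^2+2k, colour crossing edges -1 and non-crossing edges +1. Then for every spanning subgraph F of K_n that is a disjoint union of n/8 stars each with 7 leaves (an S-factor where S = K_{1,7}), the colour sum c(F) is congruent to 2 modulo 4; in particular no 0-sum S-factor exists. -/
/-!
Every edge of the star factor joins a leaf `w` to its centre `f w`, so
`c(F) = #leaves - 2 m`, where `m` counts the crossing edges. Modulo 2, `m` is the sum of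
`[w ∈ V₁] + [f w ∈ V₁]` over all leaves; adding the centres (which contribute `2 [v ∈ V₁]`)
gives `|V₁| + Σ_{centres v ∈ V₁} 8`, which is even. Hence `c(F) ≡ #leaves = 14 k² ≡ 2 (mod 4)`.
-/

open Finset

namespace StarFactor

variable {V : Type*} [Fintype V] [DecidableEq V] {f : V → V}

def centres (f : V → V) : Finset V := univ.filter fun v => f v = v

def leaves (f : V → V) : Finset V := univ.filter fun v => f v ≠ v

@[simp] lemma mem_centres {v : V} : v ∈ centres f ↔ f v = v := by simp [centres]

@[simp] lemma mem_leaves {v : V} : v ∈ leaves f ↔ f v ≠ v := by simp [leaves]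

lemma card_centres_add_card_leaves (f : V → V) :
    #(centres f) + #(leaves f) = Fintype.card V :=
  card_filter_add_card_filter_not _

lemma card_eq_mul_card_centres (hidem : ∀ v, f (f v) = f v) {s : ℕ}
    (hfibre : ∀ v, f v = v → #(univ.filter fun w => f w = v) = s) :
    Fintype.card V = s * #(centres f) := by
  rw [← card_univ, card_eq_sum_card_fiberwise (t := centres f)
    fun w _ => mem_centres.mpr (hidem w)]
  rw [sum_const_nat fun v hv => hfibre v (mem_centres.mp hv), mul_comm]

section Edges

variable {F : SimpleGraph V} [DecidableRel F.Adj]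

lemma edgeFinset_eq_image_leaves (hidem : ∀ v, f (f v) = f v)
    (hadj : ∀ u v, F.Adj u v ↔ u ≠ v ∧ f u = f v ∧ (f u = u ∨ f v = v)) :
    F.edgeFinset = (leaves f).image fun w => s(w, f w) := by
  ext e
  induction e using Sym2.ind with
  | _ u v =>
    simp only [SimpleGraph.mem_edgeFinset, SimpleGraph.mem_edgeSet, hadj, mem_image, mem_leaves]
    constructor
    · rintro ⟨hne, hfuv, hu | hv⟩
      · exact ⟨v, by rwa [← hfuv, hu], by rw [← hfuv, hu, Sym2.eq_swap]⟩
      · exact ⟨u, by rw [hfuv, hv]; exact hne.symm, by rw [hfuv, hv]⟩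
    · rintro ⟨w, hw, hwe⟩
      rcases Sym2.eq_iff.mp hwe with ⟨rfl, rfl⟩ | ⟨rfl, rfl⟩
      · exact ⟨Ne.symm hw, (hidem w).symm, Or.inr (hidem w)⟩
      · exact ⟨hw, hidem w, Or.inl (hidem w)⟩

lemma injOn_leaves_edge (hidem : ∀ v, f (f v) = f v) :
    Set.InjOn (fun w => s(w, f w)) (leaves f) := by
  intro w _ w' hw' hww'
  rcases Sym2.eq_iff.mp hww' with ⟨h, -⟩ | ⟨h, h'⟩
  · exact h
  · -- `w = f w'` and `f w = w'` force `f w' = f (f w') = w'`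
    exact absurd (by rw [← hidem w', ← h, h']) (mem_leaves.mp hw')

lemma sum_edgeFinset_eq_sum_leaves {M : Type*} [AddCommMonoid M] (g : Sym2 V → M)
    (hidem : ∀ v, f (f v) = f v)
    (hadj : ∀ u v, F.Adj u v ↔ u ≠ v ∧ f u = f v ∧ (f u = u ∨ f v = v)) :
    ∑ e ∈ F.edgeFinset, g e = ∑ w ∈ leaves f, g s(w, f w) := by
  rw [edgeFinset_eq_image_leaves hidem hadj, sum_image (injOn_leaves_edge hidem)]

end Edges

lemma natCast_card_crossing_leaves (hidem : ∀ v, f (f v) = f v)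
    (hfibre : ∀ v, f v = v → Even #(univ.filter fun w => f w = v)) (A : Finset V) :
    (#((leaves f).filter fun w => ¬(w ∈ A ↔ f w ∈ A)) : ZMod 2) = #A := by
  set χ : V → ZMod 2 := fun x => if x ∈ A then 1 else 0
  have hcross : ∀ w, χ w + χ (f w) = if ¬(w ∈ A ↔ f w ∈ A) then 1 else 0 := fun w => by
    simp only [χ]
    split_ifs <;> first | rfl | tauto
  have hcentres : ∑ v ∈ centres f, (χ v + χ (f v)) = 0 :=
    sum_eq_zero fun v hv => by rw [mem_centres.mp hv, CharTwo.add_self_eq_zero]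
  have hfibres : ∑ w, χ (f w) = 0 := by
    rw [← sum_fiberwise_of_maps_to (t := centres f) (g := f)
      fun w _ => mem_centres.mpr (hidem w)]
    refine sum_eq_zero fun v hv => ?_
    rw [sum_congr rfl fun w hw => by rw [(mem_filter.mp hw).2], sum_const,
      nsmul_eq_mul, (ZMod.natCast_eq_zero_iff_even).mpr (hfibre v (mem_centres.mp hv)),
      zero_mul]
  calc (#((leaves f).filter fun w => ¬(w ∈ A ↔ f w ∈ A)) : ZMod 2)
      = ∑ w ∈ leaves f, (χ w + χ (f w)) := by simp only [hcross, sum_boole]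
    _ = ∑ w, (χ w + χ (f w)) := by
      rw [← sum_filter_add_sum_filter_not univ (fun v => f v = v), ← centres, hcentres,
        zero_add, leaves]
    _ = #A := by rw [sum_add_distrib, hfibres, add_zero, sum_boole, filter_mem_eq_inter,
      univ_inter]

end StarFactor

lemma Finset.sum_ite_neg_one_one {ι : Type*} (s : Finset ι) (p : ι → Prop) [DecidablePred p] :
    ∑ i ∈ s, (if p i then (-1 : ℤ) else 1) = #s - 2 * #(s.filter p) := by
  rw [sum_ite, sum_const, sum_const, ← card_filter_add_card_filter_not (s := s) p]
  push_cast
  ring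

open StarFactor in
theorem stmt10_general (k : ℕ) (hk : Odd k) (V1 V2 : Finset (Fin (16 * k ^ 2)))
    (hdisj : Disjoint V1 V2) (hcover : V1 ∪ V2 = Finset.univ)
    (h1 : V1.card = 8 * k ^ 2 - 2 * k)
    (c : Sym2 (Fin (16 * k ^ 2)) → ℤ)
    (hc : ∀ u v : Fin (16 * k ^ 2), u ≠ v →
      c s(u, v) = if (u ∈ V1 ∧ v ∈ V2) ∨ (u ∈ V2 ∧ v ∈ V1) then -1 else 1)
    (F : SimpleGraph (Fin (16 * k ^ 2))) [DecidableRel F.Adj]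
    (f : Fin (16 * k ^ 2) → Fin (16 * k ^ 2))
    (hidem : ∀ v, f (f v) = f v)
    (hadj : ∀ u v, F.Adj u v ↔ u ≠ v ∧ f u = f v ∧ (f u = u ∨ f v = v))
    (hstar : ∀ v, f v = v → (Finset.univ.filter (fun w => f w = v)).card = 8) :
    (∑ e ∈ F.edgeFinset, c e) % 4 = 2 := by
  have hV2 : ∀ w, w ∈ V2 ↔ w ∉ V1 := fun w =>
    ⟨fun hw2 hw1 => disjoint_left.mp hdisj hw1 hw2,
      fun hw1 => (mem_union.mp (hcover ▸ mem_univ w)).resolve_left hw1⟩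
  have hcolour : ∀ w ∈ leaves f, c s(w, f w) = if ¬(w ∈ V1 ↔ f w ∈ V1) then -1 else 1 :=
    fun w hw => by
      rw [hc w (f w) (Ne.symm (mem_leaves.mp hw))]
      exact if_congr (by rw [hV2, hV2]; tauto) rfl rfl
  have hcentres := card_eq_mul_card_centres hidem hstar
  have hleaves := card_centres_add_card_leaves f
  have hcrossing : Even #((leaves f).filter fun w => ¬(w ∈ V1 ↔ f w ∈ V1)) := by
    rw [← ZMod.natCast_eq_zero_iff_even, natCast_card_crossing_leaves hidem
      (fun v hv => by rw [hstar v hv]; decide), h1, ZMod.natCast_eq_zero_iff_even]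
    exact ⟨4 * k ^ 2 - k, by omega⟩
  rw [sum_edgeFinset_eq_sum_leaves c hidem hadj, sum_congr rfl hcolour,
    sum_ite_neg_one_one]
  obtain ⟨j, hj⟩ := hk.pow (n := 2)
  obtain ⟨m, hm⟩ := hcrossing
  simp only [Fintype.card_fin] at hcentres hleaves
  omega

/-- With `n = 16k²` (`k` odd), `K_n` partitioned into `V₁` of size `8k²-2k` and
`V₂` of size `8k²+2k`, crossing edges coloured `-1` and all other edges `+1`:
for every spanning subgraph `F` of `K_n` that is a disjoint union of `n/8` stars
with 7 leaves each (encoded via a centre-assignment `f`), the colour sum of `F`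
is congruent to `2` mod `4`; in particular no `0`-sum `K_{1,7}`-factor exists. -/
theorem stmt10 (k : ℕ) (hk : Odd k) (V1 V2 : Finset (Fin (16 * k ^ 2)))
    (hdisj : Disjoint V1 V2) (hcover : V1 ∪ V2 = Finset.univ)
    (h1 : V1.card = 8 * k ^ 2 - 2 * k) (h2 : V2.card = 8 * k ^ 2 + 2 * k)
    (c : Sym2 (Fin (16 * k ^ 2)) → ℤ)
    (hc : ∀ u v : Fin (16 * k ^ 2), u ≠ v →
      c s(u, v) = if (u ∈ V1 ∧ v ∈ V2) ∨ (u ∈ V2 ∧ v ∈ V1) then -1 else 1)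
    (F : SimpleGraph (Fin (16 * k ^ 2))) [DecidableRel F.Adj]
    (f : Fin (16 * k ^ 2) → Fin (16 * k ^ 2))
    (hidem : ∀ v, f (f v) = f v)
    (hadj : ∀ u v, F.Adj u v ↔ u ≠ v ∧ f u = f v ∧ (f u = u ∨ f v = v))
    (hstar : ∀ v, f v = v → (Finset.univ.filter (fun w => f w = v)).card = 8) :
    (∑ e ∈ F.edgeFinset, c e) % 4 = 2 :=
  stmt10_general k hk V1 V2 hdisj hcover h1 c hc F f hidem hadj hstar
end

section
/- Let G be a spanning subgraph of K_n, let c: E(K_n) → {-1,1} be a bipartite 2-colouring with parts V_1, V_2, and let H be an n-vertex graph all of whose vertex degrees have the same parity. Then for any two copies H' and H'' of H in G, the colour sums c(H') and c(H'') are congruent modulo 4. -/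
/-!
Let `ε` be the colour of the `G`-edges inside the parts. Every edge of a copy of `H` lies in `G`,
so the colour sum of the copy is `ε (|E(H)| - 2k)`, with `k` the number of its edges crossing
between `V₁` and `V₂`; hence only `k mod 2` matters. With `p : V → ZMod 2` the indicator of `V₁`,
the edge `uv` crosses exactly when `p u + p v = 1`, so by the weighted handshake identity
`k ≡ ∑_{v ∈ f⁻¹(V₁)} deg v ≡ d |V₁| (mod 2)`, where `d` is the common parity of the degrees;
this does not depend on the copy.
-/

open Finset

namespace Sym2

variable {α M : Type*} [AddCommMonoid M]

def endpointSum (q : α → M) : Sym2 α → M :=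
  Sym2.lift ⟨fun u v => q u + q v, fun _ _ => add_comm _ _⟩

@[simp]
theorem endpointSum_mk (q : α → M) (u v : α) : endpointSum q s(u, v) = q u + q v :=
  rfl

end Sym2

namespace SimpleGraph

variable {V : Type*} [Fintype V] [DecidableEq V] (H : SimpleGraph V) [DecidableRel H.Adj]

theorem sum_edgeFinset_endpointSum {M : Type*} [AddCommMonoid M] (q : V → M) :
    ∑ e ∈ H.edgeFinset, e.endpointSum q = ∑ v, H.degree v • q v := by
  calc ∑ e ∈ H.edgeFinset, e.endpointSum q
      = ∑ d : H.Dart, q d.fst := by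
        rw [← sum_fiberwise_of_maps_to (g := Dart.edge) fun d _ => mem_edgeFinset.2 d.edge_mem]
        refine sum_congr rfl fun e he => ?_
        induction e using Sym2.ind with
        | _ u v =>
          let d : H.Dart := ⟨(u, v), mem_edgeFinset.1 he⟩
          rw [show s(u, v) = d.edge from rfl, Dart.edge_fiber, sum_pair d.symm_ne.symm]
          rfl
    _ = ∑ v, H.degree v • q v := by
        rw [← sum_fiberwise (g := fun d : H.Dart => d.fst)]
        refine sum_congr rfl fun v _ => ?_
        rw [sum_congr rfl fun d hd => by rw [(mem_filter.1 hd).2], sum_const,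
          dart_fst_fiber_card_eq_degree]

theorem sum_edgeFinset_endpointSum_eq_of_sum_eq
    (hdeg : ∀ u v : V, H.degree u % 2 = H.degree v % 2) {q q' : V → ZMod 2}
    (h : ∑ v, q v = ∑ v, q' v) :
    ∑ e ∈ H.edgeFinset, e.endpointSum q = ∑ e ∈ H.edgeFinset, e.endpointSum q' := by
  rcases isEmpty_or_nonempty V with _ | ⟨⟨v₀⟩⟩
  · simp only [sum_edgeFinset_endpointSum, univ_eq_empty, sum_empty]
  have hsmul : ∀ (r : V → ZMod 2) v, H.degree v • r v = H.degree v₀ • r v := fun r v => by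
    rw [nsmul_eq_mul, nsmul_eq_mul, (ZMod.natCast_eq_natCast_iff' _ _ 2).2 (hdeg v v₀)]
  simp only [sum_edgeFinset_endpointSum, hsmul, ← smul_sum, h]

end SimpleGraph

theorem Finset.mem_and_mem_or_mem_and_mem_iff {α : Type*} [Fintype α] [DecidableEq α]
    {s t : Finset α} (hdisj : Disjoint s t) (hcover : s ∪ t = univ) (a b : α) :
    (a ∈ s ∧ b ∈ s) ∨ (a ∈ t ∧ b ∈ t) ↔ (a ∈ s ↔ b ∈ s) := by
  obtain rfl : t = sᶜ := (IsCompl.of_eq hdisj.eq_bot hcover).compl_eq.symm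
  simp only [mem_compl]
  tauto

theorem Int.sum_mul_one_sub_two_mul_val_modEq_four {ι : Type*} (s : Finset ι) (ε : ℤ)
    {a b : ι → ZMod 2} (h : ∑ i ∈ s, a i = ∑ i ∈ s, b i) :
    ∑ i ∈ s, ε * (1 - 2 * ((a i).val : ℤ)) ≡ ∑ i ∈ s, ε * (1 - 2 * ((b i).val : ℤ)) [ZMOD 4] := by
  obtain ⟨k, hk⟩ : (2 : ℤ) ∣ ∑ i ∈ s, ((a i).val : ℤ) - ∑ i ∈ s, ((b i).val : ℤ) := by
    refine (ZMod.intCast_zmod_eq_zero_iff_dvd _ 2).1 ?_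
    push_cast
    simp only [ZMod.natCast_val, ZMod.cast_id', id, h, sub_self]
  rw [Int.modEq_iff_dvd]
  refine ⟨ε * k, ?_⟩
  simp only [← mul_sum, sum_sub_distrib, sum_const, nsmul_eq_mul, mul_one]
  linear_combination 2 * ε * hk

theorem bipartite_colouring_eq_of_adj {V : Type*} {G : SimpleGraph V} {c : Sym2 V → ℤ} {ε : ℤ}
    (hε : ε = 1 ∨ ε = -1) (hval : ∀ u v : V, u ≠ v → c s(u, v) = 1 ∨ c s(u, v) = -1)
    (S : Set V) [DecidablePred (· ∈ S)]
    (hbip : ∀ u v : V, u ≠ v → (c s(u, v) = ε ↔ G.Adj u v ∧ (u ∈ S ↔ v ∈ S)))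
    {u v : V} (huv : G.Adj u v) :
    c s(u, v) = ε * (1 - 2 * (s(u, v).endpointSum (fun w => if w ∈ S then 1 else 0 :
      V → ZMod 2)).val) := by
  have hc := hbip u v huv.ne
  have hc' : c s(u, v) = ε ∨ c s(u, v) = -ε := by
    rcases hε with rfl | rfl <;> rcases hval u v huv.ne with h | h <;> simp [h]
  have one_add_one : (1 + 1 : ZMod 2) = 0 := rfl
  by_cases hu : u ∈ S <;> by_cases hv : v ∈ S <;>
    simp only [hu, hv, huv, true_and, iff_true, iff_false, iff_self, not_true_eq_false,
      if_true, if_false, Sym2.endpointSum_mk, one_add_one, add_zero, zero_add,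
      ZMod.val_zero, ZMod.val_one] at hc ⊢ <;>
    omega

/-- Let `G` be a spanning subgraph of `K_n` on the vertex set `V`, let
`c : E(K_n) → {-1,1}` be a bipartite 2-colouring with parts `V₁, V₂` (one of the
colour classes is exactly the set of edges of `G` inside `V₁` or inside `V₂`),
and let `H` be a graph on `V` all of whose degrees have the same parity. Then
for any two copies (embeddings) of `H` in `G`, the colour sums are congruent
modulo 4. -/
theorem stmt11 {V : Type*} [Fintype V] [DecidableEq V]
    (G H : SimpleGraph V) [DecidableRel H.Adj]
    (c : Sym2 V → ℤ) (hval : ∀ u v : V, u ≠ v → c s(u, v) = 1 ∨ c s(u, v) = -1)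
    (V1 V2 : Finset V) (hdisj : Disjoint V1 V2) (hcover : V1 ∪ V2 = Finset.univ)
    (hbip :
      (∀ u v : V, u ≠ v → (c s(u, v) = 1 ↔
        G.Adj u v ∧ ((u ∈ V1 ∧ v ∈ V1) ∨ (u ∈ V2 ∧ v ∈ V2)))) ∨
      (∀ u v : V, u ≠ v → (c s(u, v) = -1 ↔
        G.Adj u v ∧ ((u ∈ V1 ∧ v ∈ V1) ∨ (u ∈ V2 ∧ v ∈ V2)))))
    (hdeg : ∀ u v : V, H.degree u % 2 = H.degree v % 2)
    (f g : H ↪g G) :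
    Int.ModEq 4 (∑ e ∈ H.edgeFinset, c (Sym2.map f e))
      (∑ e ∈ H.edgeFinset, c (Sym2.map g e)) := by
  obtain ⟨ε, hε, hεbip⟩ : ∃ ε : ℤ, (ε = 1 ∨ ε = -1) ∧
      ∀ u v : V, u ≠ v → (c s(u, v) = ε ↔ G.Adj u v ∧ (u ∈ (V1 : Set V) ↔ v ∈ (V1 : Set V))) := by
    simp only [mem_and_mem_or_mem_and_mem_iff hdisj hcover, Finset.mem_coe] at hbip ⊢
    rcases hbip with h | h
    exacts [⟨1, .inl rfl, h⟩, ⟨-1, .inr rfl, h⟩]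
  set p : V → ZMod 2 := fun w => if w ∈ (V1 : Set V) then 1 else 0
  have hc : ∀ φ : H ↪g G, ∀ e ∈ H.edgeFinset,
      c (e.map φ) = ε * (1 - 2 * (e.endpointSum (p ∘ φ)).val) := by
    intro φ e he
    induction e using Sym2.ind with
    | _ u v =>
      exact bipartite_colouring_eq_of_adj hε hval _ hεbip
        (φ.map_adj_iff.2 (SimpleGraph.mem_edgeFinset.1 he))
  have hsum : ∀ φ : H ↪g G, ∑ v, p (φ v) = ∑ v, p v := fun φ =>
    Fintype.sum_bijective φ φ.injective.bijective_of_finite _ _ fun _ => rfl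
  rw [sum_congr rfl (hc f), sum_congr rfl (hc g)]
  exact Int.sum_mul_one_sub_two_mul_val_modEq_four _ ε
    (H.sum_edgeFinset_endpointSum_eq_of_sum_eq hdeg ((hsum f).trans (hsum g).symm))
end

section
/- Let ε ∈ [0, 1/10], n be sufficiently large, and G be an n-vertex graph with minimum degree at least (1-ε)n, equipped with a 2-edge-colouring c that is not bipartite. Then G contains a 4-cycle having exactly three edges of one colour and one edge of the other colour. -/
/-! A colouring with no (1,3)-cycle makes the two colour-parities of the 2-paths between any two
vertices agree, since two such paths form a 4-cycle. When any three vertices have a common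
neighbour (which a minimum degree above `2n/3` guarantees), it follows that all triangles have the
same colour-parity `b`: any two triangles are linked by a chain of triangles sharing an edge.
Fixing a vertex `v₀` and letting `f u` be the parity of a 2-path from `v₀` to `u`, the triangle
`u v w` through a common neighbour `w` of `u`, `v`, `v₀` gives `c(uv) = b + f u + f v`, so the
partition by `f` witnesses that the colouring is bipartite. -/

/-- A 2-edge-colouring `c` of `G` is bipartite if there is a partition
`(V1, V1ᶜ)` of the vertices such that one colour class is exactly the set of
edges of `G` lying inside `V1` or inside `V1ᶜ`. -/
def IsBipartiteColouring {n : ℕ} (G : SimpleGraph (Fin n))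
    (c : Sym2 (Fin n) → Bool) : Prop :=
  ∃ (V1 : Finset (Fin n)) (b : Bool), ∀ u v : Fin n, G.Adj u v →
    (c s(u, v) = b ↔ ((u ∈ V1 ∧ v ∈ V1) ∨ (u ∉ V1 ∧ v ∉ V1)))

namespace SimpleGraph

variable {V : Type*} (G : SimpleGraph V)

def TriplesHaveCommonNeighbor : Prop :=
  ∀ x y z : V, ∃ w, G.Adj x w ∧ G.Adj y w ∧ G.Adj z w

theorem triplesHaveCommonNeighbor_of_degree [Fintype V] [DecidableEq V] [DecidableRel G.Adj]
    (h : ∀ v, 2 * Fintype.card V < 3 * G.degree v) : G.TriplesHaveCommonNeighbor := by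
  intro x y z
  suffices (G.neighborFinset x ∩ G.neighborFinset y ∩ G.neighborFinset z).Nonempty by
    obtain ⟨w, hw⟩ := this
    simp only [Finset.mem_inter, mem_neighborFinset] at hw
    exact ⟨w, hw.1.1, hw.1.2, hw.2⟩
  rw [← Finset.card_pos]
  have hxy := Finset.card_inter_add_card_union (G.neighborFinset x) (G.neighborFinset y)
  have hxyz := Finset.card_inter_add_card_union
    (G.neighborFinset x ∩ G.neighborFinset y) (G.neighborFinset z)
  have := Finset.card_le_univ (G.neighborFinset x ∪ G.neighborFinset y)
  have := Finset.card_le_univ (G.neighborFinset x ∩ G.neighborFinset y ∪ G.neighborFinset z)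
  simp only [card_neighborFinset_eq_degree] at hxy hxyz
  have := h x; have := h y; have := h z
  omega

variable (c : Sym2 V → Bool)

/-- Equivalently: no 4-cycle `a b d e` carries exactly one or exactly three `true` edges. -/
def FourCyclesEven : Prop :=
  ∀ a b d e : V, G.Adj a b → G.Adj b d → G.Adj a e → G.Adj e d → a ≠ d → b ≠ e →
    (c s(a, b) ^^ c s(b, d)) = (c s(a, e) ^^ c s(e, d))

theorem fourCyclesEven_of_not_exists
    (h : ¬∃ a b d e : V, G.Adj a b ∧ G.Adj b d ∧ G.Adj d e ∧ G.Adj e a ∧ a ≠ d ∧ b ≠ e ∧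
      ([c s(a, b), c s(b, d), c s(d, e), c s(e, a)].count true = 1 ∨
       [c s(a, b), c s(b, d), c s(d, e), c s(e, a)].count true = 3)) :
    G.FourCyclesEven c := by
  intro a b d e hab hbd hae hed had hbe
  have hcount := fun H => h ⟨a, b, d, e, hab, hbd, hed.symm, hae.symm, had, hbe, H⟩
  rw [Sym2.eq_swap (a := a) (b := e), Sym2.eq_swap (a := e) (b := d)]
  revert hcount
  generalize c s(a, b) = p, c s(b, d) = q, c s(d, e) = r, c s(e, a) = s
  revert p q r s
  decide

def triangleParity (u v w : V) : Bool := c s(u, v) ^^ c s(v, w) ^^ c s(w, u)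

variable {G c}

theorem triangleParity_rotate (u v w : V) :
    triangleParity c u v w = triangleParity c v w u := by
  simp only [triangleParity]
  generalize c s(u, v) = p, c s(v, w) = q, c s(w, u) = r
  revert p q r
  decide

theorem pathParity_eq (hC : G.FourCyclesEven c) {u v w w' : V}
    (huw : G.Adj u w) (hwv : G.Adj w v) (huw' : G.Adj u w') (hw'v : G.Adj w' v) :
    (c s(u, w) ^^ c s(w, v)) = (c s(u, w') ^^ c s(w', v)) := by
  rcases eq_or_ne u v with rfl | huv
  · simp only [Sym2.eq_swap (a := w), Sym2.eq_swap (a := w'), Bool.xor_self]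
  rcases eq_or_ne w w' with rfl | hww'
  · rfl
  exact hC u w v w' huw hwv huw' hw'v huv hww'

theorem triangleParity_eq_of_edge (hC : G.FourCyclesEven c) {u v w w' : V}
    (hvw : G.Adj v w) (hwu : G.Adj w u) (hvw' : G.Adj v w') (hw'u : G.Adj w' u) :
    triangleParity c u v w = triangleParity c u v w' := by
  simp only [triangleParity, Bool.xor_assoc, pathParity_eq hC hvw hwu hvw' hw'u]

theorem triangleParity_eq_of_vertex (hT : G.TriplesHaveCommonNeighbor) (hC : G.FourCyclesEven c)
    {x a b y z : V} (hxa : G.Adj x a) (hab : G.Adj a b) (hbx : G.Adj b x)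
    (hxy : G.Adj x y) (hyz : G.Adj y z) (hzx : G.Adj z x) :
    triangleParity c x a b = triangleParity c x y z := by
  obtain ⟨d, hxd, had, hyd⟩ := hT x a y
  calc triangleParity c x a b = triangleParity c x a d :=
        triangleParity_eq_of_edge hC hab hbx had hxd.symm
    _ = triangleParity c d x a := (triangleParity_rotate d x a).symm
    _ = triangleParity c d x y := triangleParity_eq_of_edge hC hxa had hxy hyd
    _ = triangleParity c x y d := triangleParity_rotate d x y
    _ = triangleParity c x y z := triangleParity_eq_of_edge hC hyd hxd.symm hyz hzx

theorem triangleParity_eq (hT : G.TriplesHaveCommonNeighbor) (hC : G.FourCyclesEven c)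
    {u v w x y z : V} (huv : G.Adj u v) (hvw : G.Adj v w) (hwu : G.Adj w u)
    (hxy : G.Adj x y) (hyz : G.Adj y z) (hzx : G.Adj z x) :
    triangleParity c u v w = triangleParity c x y z := by
  obtain ⟨a, hua, hxa, -⟩ := hT u x x
  obtain ⟨e, hue, hae, hxe⟩ := hT u a x
  calc triangleParity c u v w = triangleParity c u a e :=
        triangleParity_eq_of_vertex hT hC huv hvw hwu hua hae hue.symm
    _ = triangleParity c a e u := triangleParity_rotate u a e
    _ = triangleParity c a e x := triangleParity_eq_of_edge hC hue.symm hua hxe.symm hxa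
    _ = triangleParity c x a e := (triangleParity_rotate x a e).symm
    _ = triangleParity c x y z := triangleParity_eq_of_vertex hT hC hxa hae hxe.symm hxy hyz hzx

theorem exists_potential_of_fourCyclesEven (hT : G.TriplesHaveCommonNeighbor)
    (hC : G.FourCyclesEven c) :
    ∃ (f : V → Bool) (b : Bool), ∀ u v, G.Adj u v → c s(u, v) = (b ^^ f u ^^ f v) := by
  rcases isEmpty_or_nonempty V with _ | ⟨⟨v₀⟩⟩
  · exact ⟨fun _ => false, false, fun u => isEmptyElim u⟩
  obtain ⟨p, hv₀p, -, -⟩ := hT v₀ v₀ v₀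
  obtain ⟨q, hv₀q, hpq, -⟩ := hT v₀ p p
  choose m hm₁ hm₂ hm₃ using id hT
  refine ⟨fun u => c s(v₀, m v₀ u u) ^^ c s(m v₀ u u, u), triangleParity c v₀ p q,
    fun u v huv => ?_⟩
  set w := m u v v₀
  have hfu := pathParity_eq hC (hm₁ v₀ u u) (hm₂ v₀ u u).symm (hm₃ u v v₀) (hm₁ u v v₀).symm
  have hfv := pathParity_eq hC (hm₁ v₀ v v) (hm₂ v₀ v v).symm (hm₃ u v v₀) (hm₂ u v v₀).symm
  have hb := triangleParity_eq hT hC huv (hm₂ u v v₀) (hm₁ u v v₀).symm hv₀p hpq hv₀q.symm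
  beta_reduce
  rw [hfu, hfv, ← hb, triangleParity, Sym2.eq_swap (a := v)]
  generalize c s(u, v) = p, c s(w, v) = q, c s(w, u) = r, c s(v₀, w) = s
  revert p q r s
  decide

end SimpleGraph

theorem isBipartiteColouring_of_potential {n : ℕ} {G : SimpleGraph (Fin n)}
    {c : Sym2 (Fin n) → Bool} (f : Fin n → Bool) (b : Bool)
    (h : ∀ u v, G.Adj u v → c s(u, v) = (b ^^ f u ^^ f v)) : IsBipartiteColouring G c := by
  refine ⟨Finset.univ.filter (f · = true), b, fun u v huv => ?_⟩
  simp only [h u v huv, Finset.mem_filter, Finset.mem_univ, true_and]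
  cases f u <;> cases f v <;> cases b <;> decide

theorem stmt13_general (ε : ℝ) (hε1 : ε ≤ 1 / 10) :
    ∃ n0 : ℕ, ∀ n : ℕ, n0 ≤ n →
    ∀ (G : SimpleGraph (Fin n)) (c : Sym2 (Fin n) → Bool),
      (∀ v : Fin n, (1 - ε) * n ≤ ((G.neighborSet v).ncard : ℝ)) →
      ¬IsBipartiteColouring G c →
      ∃ a b d e : Fin n, G.Adj a b ∧ G.Adj b d ∧ G.Adj d e ∧ G.Adj e a ∧
        a ≠ d ∧ b ≠ e ∧
        ([c s(a, b), c s(b, d), c s(d, e), c s(e, a)].count true = 1 ∨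
         [c s(a, b), c s(b, d), c s(d, e), c s(e, a)].count true = 3) := by
  refine ⟨0, fun n _ G c hdeg hnb => ?_⟩
  classical
  by_contra hno
  have hdense : ∀ v, 2 * Fintype.card (Fin n) < 3 * G.degree v := by
    intro v
    have hv := hdeg v
    rw [Set.ncard_eq_toFinset_card', Set.toFinset_card, G.card_neighborSet_eq_degree] at hv
    have hn : (0 : ℝ) < n := Nat.cast_pos.mpr v.pos
    rw [Fintype.card_fin]
    exact_mod_cast (by nlinarith : (2 * n : ℝ) < 3 * G.degree v)
  obtain ⟨f, b, hf⟩ := SimpleGraph.exists_potential_of_fourCyclesEven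
    (G.triplesHaveCommonNeighbor_of_degree hdense) (G.fourCyclesEven_of_not_exists c hno)
  exact hnb (isBipartiteColouring_of_potential f b hf)

/-- Let `ε ∈ [0,1/10]`, `n` sufficiently large, and `G` an `n`-vertex graph with
minimum degree at least `(1-ε)n`, equipped with a non-bipartite 2-edge-colouring.
Then `G` contains a 4-cycle with exactly three edges of one colour and one of
the other. -/
theorem stmt13 (ε : ℝ) (hε0 : 0 ≤ ε) (hε1 : ε ≤ 1 / 10) :
    ∃ n0 : ℕ, ∀ n : ℕ, n0 ≤ n →
    ∀ (G : SimpleGraph (Fin n)) (c : Sym2 (Fin n) → Bool),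
      (∀ v : Fin n, (1 - ε) * n ≤ ((G.neighborSet v).ncard : ℝ)) →
      ¬IsBipartiteColouring G c →
      ∃ a b d e : Fin n, G.Adj a b ∧ G.Adj b d ∧ G.Adj d e ∧ G.Adj e a ∧
        a ≠ d ∧ b ≠ e ∧
        ([c s(a, b), c s(b, d), c s(d, e), c s(e, a)].count true = 1 ∨
         [c s(a, b), c s(b, d), c s(d, e), c s(e, a)].count true = 3) :=
  stmt13_general ε hε1
end

section
/- Fix ε, ν > 0 and set ξ = (1 - 2ν - 4ε)/8. Let G be an n-vertex graph with minimum degree at least (1-ε)n equipped with a 2-edge-colouring in red and blue such that each colour class has size between (1/2 - ν)C(n,2) and (1/2 + ν)C(n,2). Then there are at least ξn vertices of G each incident to at least ξn red edges and at least ξn blue edges. -/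
/-!
Call a vertex red-poor (blue-poor) if it has fewer than `ξn` red (blue) edges. If fewer than `ξn`
vertices have both colour degrees at least `ξn`, then the red-poor and blue-poor vertices together
number more than `(1 - ξ)n`. A blue-poor vertex has red degree above `(1 - ε - ξ)n`, so the red edge
bound caps the number of blue-poor vertices at about `n/2`, and symmetrically for red-poor ones;
hence both classes are large. But a pair (blue-poor, red-poor) is a blue edge, a red edge or a
non-edge, and counting these from the side where they are rare shows that the product of the two
class sizes is only `O((ξ + ε) n²)`. For `ξ = (1 - 2ν - 4ε)/8` these requirements are incompatible.
-/

theorem add_le_one_sub_of_color_bounds {ε ν ξ r s : ℝ} (hε : 0 ≤ ε) (hν : 0 < ν)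
    (hξ : 8 * ξ = 1 - 2 * ν - 4 * ε) (hξ_pos : 0 < ξ) (hr : 0 ≤ r) (hs : 0 ≤ s)
    (hr_le : r * (1 - ε - ξ) ≤ 1 / 2 + ν) (hs_le : s * (1 - ε - ξ) ≤ 1 / 2 + ν)
    (hrs : r * s ≤ r * ξ + s * (ξ + ε)) (hsr : s * r ≤ s * ξ + r * (ξ + ε)) :
    r + s ≤ 1 - ξ := by
  by_contra! h
  nlinarith [mul_nonneg hr hs, sq_nonneg (r - s), sq_nonneg (r + s - 1), mul_nonneg hξ_pos.le hε,
    sq_nonneg ξ, mul_nonneg hr hε, mul_nonneg hs hε]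

theorem add_le_one_sub_mul_of_color_bounds {ε ν ξ N x y : ℝ} (hε : 0 ≤ ε) (hν : 0 < ν)
    (hξ : 8 * ξ = 1 - 2 * ν - 4 * ε) (hξ_pos : 0 < ξ) (hN : 0 < N) (hx : 0 ≤ x) (hy : 0 ≤ y)
    (hx_le : x * ((1 - ε) * N - ξ * N) ≤ (1 / 2 + ν) * N ^ 2)
    (hy_le : y * ((1 - ε) * N - ξ * N) ≤ (1 / 2 + ν) * N ^ 2)
    (hxy : x * y ≤ x * (ξ * N) + y * (ξ * N + N - (1 - ε) * N))
    (hyx : y * x ≤ y * (ξ * N) + x * (ξ * N + N - (1 - ε) * N)) :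
    x + y ≤ (1 - ξ) * N := by
  obtain ⟨r, rfl⟩ : ∃ r, x = r * N := ⟨x / N, (div_mul_cancel₀ x hN.ne').symm⟩
  obtain ⟨s, rfl⟩ : ∃ s, y = s * N := ⟨y / N, (div_mul_cancel₀ y hN.ne').symm⟩
  have hN2 : 0 < N ^ 2 := by positivity
  have h := add_le_one_sub_of_color_bounds hε hν hξ hξ_pos (nonneg_of_mul_nonneg_left hx hN)
    (nonneg_of_mul_nonneg_left hy hN) (le_of_mul_le_mul_right (by linear_combination hx_le) hN2)
    (le_of_mul_le_mul_right (by linear_combination hy_le) hN2)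
    (le_of_mul_le_mul_right (by linear_combination hxy) hN2)
    (le_of_mul_le_mul_right (by linear_combination hyx) hN2)
  linear_combination N * h

namespace SimpleGraph

open Finset

section Counting

variable {V : Type*} [Fintype V] (H : SimpleGraph V) [DecidableRel H.Adj]

theorem ncard_neighborSet_eq_degree (v : V) : (H.neighborSet v).ncard = H.degree v := by
  rw [← Nat.card_coe_set_eq, Nat.card_eq_fintype_card, card_neighborSet_eq_degree]

theorem card_filter_adj_le_degree (s : Finset V) (v : V) : #{w ∈ s | H.Adj v w} ≤ H.degree v := by
  rw [← card_neighborFinset_eq_degree, neighborFinset_eq_filter]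
  exact card_le_card (filter_subset_filter _ (subset_univ s))

theorem card_filter_not_adj_le (s : Finset V) (v : V) :
    #{w ∈ s | ¬H.Adj v w} ≤ Fintype.card V - H.degree v := by
  classical
  calc #{w ∈ s | ¬H.Adj v w} ≤ #{w | ¬H.Adj v w} :=
        card_le_card (filter_subset_filter _ (subset_univ s))
    _ = #(H.neighborFinset v)ᶜ := by rw [neighborFinset_eq_filter, compl_filter]
    _ = Fintype.card V - H.degree v := by rw [card_compl, card_neighborFinset_eq_degree]

/-- A pair `(r, s)` is either an edge, counted at `r`, or a non-edge, counted at `s`. -/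
theorem card_mul_card_le_sum_degree_add_sum (R S : Finset V) :
    #R * #S ≤ ∑ r ∈ R, H.degree r + ∑ s ∈ S, (Fintype.card V - H.degree s) := by
  have hswap : ∑ r ∈ R, #{s ∈ S | ¬H.Adj r s} = ∑ s ∈ S, #{r ∈ R | ¬H.Adj s r} := by
    refine (sum_card_bipartiteAbove_eq_sum_card_bipartiteBelow (fun r s => ¬H.Adj r s)).trans
      (sum_congr rfl fun s _ => ?_)
    simp only [bipartiteBelow, H.adj_comm _ s]
  calc #R * #S = ∑ r ∈ R, (#{s ∈ S | H.Adj r s} + #{s ∈ S | ¬H.Adj r s}) := by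
        simp only [card_filter_add_card_filter_not, sum_const, smul_eq_mul]
    _ = ∑ r ∈ R, #{s ∈ S | H.Adj r s} + ∑ s ∈ S, #{r ∈ R | ¬H.Adj s r} := by
        rw [sum_add_distrib, hswap]
    _ ≤ ∑ r ∈ R, H.degree r + ∑ s ∈ S, (Fintype.card V - H.degree s) := by
        gcongr with r _ s _
        · exact H.card_filter_adj_le_degree S r
        · exact H.card_filter_not_adj_le R s

noncomputable def lowDegreeVertices (t : ℝ) : Finset V := {v | (H.degree v : ℝ) < t}

end Counting

section Coloring

variable {V : Type*} (G : SimpleGraph V) (c : Sym2 V → Bool)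

def colorGraph (b : Bool) : SimpleGraph V where
  Adj u w := G.Adj u w ∧ c s(u, w) = b
  symm := ⟨fun _ _ h => ⟨h.1.symm, Sym2.eq_swap ▸ h.2⟩⟩
  loopless := ⟨fun u h => G.loopless.irrefl u h.1⟩

@[simp]
theorem colorGraph_adj {b : Bool} {u w : V} :
    (G.colorGraph c b).Adj u w ↔ G.Adj u w ∧ c s(u, w) = b :=
  Iff.rfl

instance [DecidableRel G.Adj] (b : Bool) : DecidableRel (G.colorGraph c b).Adj :=
  fun u w => inferInstanceAs (Decidable (G.Adj u w ∧ c s(u, w) = b))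

theorem edgeSet_colorGraph (b : Bool) :
    (G.colorGraph c b).edgeSet = {e ∈ G.edgeSet | c e = b} := by
  ext e
  induction e using Sym2.ind
  simp

variable [Fintype V] [DecidableRel G.Adj]

theorem sum_degree_colorGraph (b : Bool) :
    ∑ v, (G.colorGraph c b).degree v = 2 * {e ∈ G.edgeSet | c e = b}.ncard := by
  rw [sum_degrees_eq_twice_card_edges, ← edgeSet_colorGraph, ← coe_edgeFinset,
    Set.ncard_coe_finset]

theorem degree_colorGraph_add_degree_colorGraph_not (b : Bool) (v : V) :
    (G.colorGraph c b).degree v + (G.colorGraph c !b).degree v = G.degree v := by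
  simp only [← card_neighborFinset_eq_degree, neighborFinset_eq_filter, colorGraph_adj]
  rw [← card_filter_add_card_filter_not (s := {w | G.Adj v w}) (fun w => c s(v, w) = b),
    filter_filter, filter_filter]
  simp only [Bool.eq_not_iff]

noncomputable def bichromaticVertices (t : ℝ) : Finset V :=
  {v | t ≤ (G.colorGraph c true).degree v ∧ t ≤ (G.colorGraph c false).degree v}

theorem card_le_card_bichromaticVertices_add (t : ℝ) :
    Fintype.card V ≤ #(G.bichromaticVertices c t) + #((G.colorGraph c true).lowDegreeVertices t) +
      #((G.colorGraph c false).lowDegreeVertices t) := by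
  classical
  calc Fintype.card V = #(univ : Finset V) := card_univ.symm
    _ ≤ #(G.bichromaticVertices c t ∪ (G.colorGraph c true).lowDegreeVertices t ∪
          (G.colorGraph c false).lowDegreeVertices t) := by
        refine card_le_card fun v _ => ?_
        simp only [bichromaticVertices, lowDegreeVertices, mem_union, mem_filter, mem_univ,
          true_and]
        have := lt_or_ge ((G.colorGraph c true).degree v : ℝ) t
        have := lt_or_ge ((G.colorGraph c false).degree v : ℝ) t
        tauto
    _ ≤ _ := (card_union_le _ _).trans (by grw [card_union_le])

variable {G} {δ : ℝ} (hmin : ∀ v, δ ≤ G.degree v)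
include hmin

theorem card_lowDegreeVertices_colorGraph_mul_le (b : Bool) (t : ℝ) :
    #((G.colorGraph c b).lowDegreeVertices t) * (δ - t) ≤
      2 * {e ∈ G.edgeSet | c e = !b}.ncard := by
  set L := (G.colorGraph c b).lowDegreeVertices t
  have hdeg : ∀ v ∈ L, δ - t ≤ (G.colorGraph c !b).degree v := by
    intro v hv
    have hv : ((G.colorGraph c b).degree v : ℝ) < t := (mem_filter.mp hv).2
    have hsplit : ((G.colorGraph c b).degree v : ℝ) + (G.colorGraph c !b).degree v =
        G.degree v := by exact_mod_cast G.degree_colorGraph_add_degree_colorGraph_not c b v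
    linarith [hmin v]
  calc #L * (δ - t) ≤ ∑ v ∈ L, ((G.colorGraph c !b).degree v : ℝ) := by
        simpa using card_nsmul_le_sum L _ _ hdeg
    _ ≤ ∑ v, ((G.colorGraph c !b).degree v : ℝ) :=
        sum_le_sum_of_subset_of_nonneg (subset_univ L) fun _ _ _ => by positivity
    _ = 2 * {e ∈ G.edgeSet | c e = !b}.ncard := by
        exact_mod_cast G.sum_degree_colorGraph c !b

theorem card_lowDegreeVertices_mul_card_le (b : Bool) (t : ℝ) :
    (#((G.colorGraph c b).lowDegreeVertices t) : ℝ) * #((G.colorGraph c !b).lowDegreeVertices t) ≤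
      #((G.colorGraph c b).lowDegreeVertices t) * t +
        #((G.colorGraph c !b).lowDegreeVertices t) * (t + Fintype.card V - δ) := by
  set L := (G.colorGraph c b).lowDegreeVertices t
  set L' := (G.colorGraph c !b).lowDegreeVertices t
  have hL : ∀ v ∈ L, ((G.colorGraph c b).degree v : ℝ) ≤ t := fun v hv => (mem_filter.mp hv).2.le
  have hL' : ∀ v ∈ L', ((Fintype.card V - (G.colorGraph c b).degree v : ℕ) : ℝ) ≤
      t + Fintype.card V - δ := by
    intro v hv
    have hv : ((G.colorGraph c !b).degree v : ℝ) < t := (mem_filter.mp hv).2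
    have hsplit : ((G.colorGraph c b).degree v : ℝ) + (G.colorGraph c !b).degree v =
        G.degree v := by exact_mod_cast G.degree_colorGraph_add_degree_colorGraph_not c b v
    rw [Nat.cast_sub ((G.colorGraph c b).degree_lt_card_verts v).le]
    linarith [hmin v]
  calc (#L : ℝ) * #L' ≤ ∑ v ∈ L, ((G.colorGraph c b).degree v : ℝ) +
        ∑ v ∈ L', ((Fintype.card V - (G.colorGraph c b).degree v : ℕ) : ℝ) := by
        exact_mod_cast (G.colorGraph c b).card_mul_card_le_sum_degree_add_sum L L'
    _ ≤ #L * t + #L' * (t + Fintype.card V - δ) := by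
        grw [sum_le_card_nsmul L _ _ hL, sum_le_card_nsmul L' _ _ hL', nsmul_eq_mul, nsmul_eq_mul]

end Coloring

theorem le_card_bichromaticVertices {V : Type*} [Fintype V] {G : SimpleGraph V}
    [DecidableRel G.Adj] {c : Sym2 V → Bool} {ε ν ξ : ℝ} (hε : 0 ≤ ε) (hν : 0 < ν)
    (hξ : 8 * ξ = 1 - 2 * ν - 4 * ε) (hξ_pos : 0 < ξ)
    (hmin : ∀ v, (1 - ε) * Fintype.card V ≤ G.degree v)
    (hcolor : ∀ b, ({e ∈ G.edgeSet | c e = b}.ncard : ℝ) ≤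
      (1 / 2 + ν) * (Fintype.card V).choose 2) :
    ξ * Fintype.card V ≤ #(G.bichromaticVertices c (ξ * Fintype.card V)) := by
  set N : ℝ := (Fintype.card V : ℝ)
  obtain hN | hN := (Fintype.card V).eq_zero_or_pos
  · simp [N, hN]
  have hedges : ∀ b, 2 * ({e ∈ G.edgeSet | c e = b}.ncard : ℝ) ≤ (1 / 2 + ν) * N ^ 2 := by
    intro b
    have hchoose : (((Fintype.card V).choose 2 : ℕ) : ℝ) = N * (N - 1) / 2 :=
      Nat.cast_choose_two ℝ _
    nlinarith [hcolor b, mul_nonneg (by linarith : (0 : ℝ) ≤ 1 / 2 + ν) (Nat.cast_nonneg _ : 0 ≤ N)]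
  have hcover : N ≤ #(G.bichromaticVertices c (ξ * N)) +
      #((G.colorGraph c true).lowDegreeVertices (ξ * N)) +
        #((G.colorGraph c false).lowDegreeVertices (ξ * N)) := by
    rw [show N = ((Fintype.card V : ℕ) : ℝ) from rfl]
    exact_mod_cast G.card_le_card_bichromaticVertices_add c (ξ * N)
  have hpoor := add_le_one_sub_mul_of_color_bounds hε hν hξ hξ_pos (by positivity)
    (Nat.cast_nonneg _) (Nat.cast_nonneg _)
    ((G.card_lowDegreeVertices_colorGraph_mul_le c hmin true _).trans (hedges false))
    ((G.card_lowDegreeVertices_colorGraph_mul_le c hmin false _).trans (hedges true))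
    (G.card_lowDegreeVertices_mul_card_le c hmin true _)
    (G.card_lowDegreeVertices_mul_card_le c hmin false _)
  linarith

end SimpleGraph

theorem stmt14_general (ε ν : ℝ) (hε : 0 < ε) (hν : 0 < ν) (hξ : 2 * ν + 4 * ε < 1)
    (n : ℕ) (G : SimpleGraph (Fin n)) (c : Sym2 (Fin n) → Bool)
    (hmin : ∀ v : Fin n, (1 - ε) * n ≤ ((G.neighborSet v).ncard : ℝ))
    (hredUB : (({e ∈ G.edgeSet | c e = true}.ncard : ℝ)) ≤
        (1 / 2 + ν) * (n.choose 2))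
    (hblueUB : (({e ∈ G.edgeSet | c e = false}.ncard : ℝ)) ≤
        (1 / 2 + ν) * (n.choose 2)) :
    (1 - 2 * ν - 4 * ε) / 8 * n ≤
      (({v : Fin n |
          (1 - 2 * ν - 4 * ε) / 8 * n ≤
            (({w : Fin n | G.Adj v w ∧ c s(v, w) = true}.ncard : ℝ)) ∧
          (1 - 2 * ν - 4 * ε) / 8 * n ≤
            (({w : Fin n | G.Adj v w ∧ c s(v, w) = false}.ncard : ℝ))}.ncard : ℝ)) := by
  classical
  have key := SimpleGraph.le_card_bichromaticVertices (c := c) (ξ := (1 - 2 * ν - 4 * ε) / 8)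
    hε.le hν (by ring) (by linarith)
    (by simpa [SimpleGraph.ncard_neighborSet_eq_degree] using hmin)
    (Bool.forall_bool.mpr ⟨by simpa using hblueUB, by simpa using hredUB⟩)
  rw [Fintype.card_fin] at key
  have hdeg : ∀ b v, {w | G.Adj v w ∧ c s(v, w) = b}.ncard = (G.colorGraph c b).degree v :=
    fun b v => (G.colorGraph c b).ncard_neighborSet_eq_degree v
  simp only [hdeg]
  convert key using 2
  rw [SimpleGraph.bichromaticVertices, ← Set.ncard_coe_finset, Finset.coe_filter_univ]

/-- Fix `ε, ν > 0` with `ξ = (1 - 2ν - 4ε)/8 > 0`. Let `G` be an `n`-vertex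
graph with minimum degree at least `(1-ε)n` with a `ν`-balanced 2-edge-colouring
in red (`true`) and blue (`false`). Then at least `ξn` vertices each have red
degree at least `ξn` and blue degree at least `ξn`. -/
theorem stmt14 (ε ν : ℝ) (hε : 0 < ε) (hν : 0 < ν) (hξ : 2 * ν + 4 * ε < 1)
    (n : ℕ) (G : SimpleGraph (Fin n)) (c : Sym2 (Fin n) → Bool)
    (hmin : ∀ v : Fin n, (1 - ε) * n ≤ ((G.neighborSet v).ncard : ℝ))
    (hredLB : (1 / 2 - ν) * (n.choose 2) ≤
        (({e ∈ G.edgeSet | c e = true}.ncard : ℝ)))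
    (hredUB : (({e ∈ G.edgeSet | c e = true}.ncard : ℝ)) ≤
        (1 / 2 + ν) * (n.choose 2))
    (hblueLB : (1 / 2 - ν) * (n.choose 2) ≤
        (({e ∈ G.edgeSet | c e = false}.ncard : ℝ)))
    (hblueUB : (({e ∈ G.edgeSet | c e = false}.ncard : ℝ)) ≤
        (1 / 2 + ν) * (n.choose 2)) :
    (1 - 2 * ν - 4 * ε) / 8 * n ≤
      (({v : Fin n |
          (1 - 2 * ν - 4 * ε) / 8 * n ≤
            (({w : Fin n | G.Adj v w ∧ c s(v, w) = true}.ncard : ℝ)) ∧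
          (1 - 2 * ν - 4 * ε) / 8 * n ≤
            (({w : Fin n | G.Adj v w ∧ c s(v, w) = false}.ncard : ℝ))}.ncard : ℝ)) :=
  stmt14_general ε ν hε hν hξ n G c hmin hredUB hblueUB
end

section
/- In a type-2 copy K of K_{2,2Δ} with parts A = {x, z} and B = {y} ∪ B', suppose a copy H' of a graph H in G uses only the edges from x to {y} ∪ B_1 and from z to B_2 where B_1, B_2 ⊆ B' are disjoint of appropriate sizes (|{y} ∪ B_1| = |B_2|). Then exchanging the images of x and z produces an embedding H'' of H in G with c(H'') - c(H') ∈ {2, -2}. -/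
/-!
Every path `xwz` with `w ∈ B'` contributes `p - q` to the exchange when `w ∈ B₂` and `q - p`
when `w ∈ B₁`; since `|B₂| = |B₁| + 1` these cancel up to a single `p - q`, and the change is
`c(yz) - c(xy) + p - q`. Type 2 means that exactly one of the paths `xyz`, `xwz` is
alternating, so exactly one of the two differences vanishes and the other is `±2`.
-/

open Finset

lemma sub_add_sub_eq_two_or_eq_neg_two {a b p q : ℤ} (ha : a = 1 ∨ a = -1)
    (hb : b = 1 ∨ b = -1) (hp : p = 1 ∨ p = -1) (hq : q = 1 ∨ q = -1)
    (h : |a + b| ≠ |p + q|) :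
    b - a + (p - q) = 2 ∨ b - a + (p - q) = -2 := by
  rcases ha with rfl | rfl <;> rcases hb with rfl | rfl <;> rcases hp with rfl | rfl <;>
    rcases hq with rfl | rfl <;> revert h <;> norm_num

lemma exchange_sum_eq {V : Type*} [DecidableEq V] (c : Sym2 V → ℤ) (x z y : V)
    (B' B1 B2 : Finset V) (hyB' : y ∉ B') (hB1 : B1 ⊆ B') (hB2 : B2 ⊆ B')
    (hcard : B1.card + 1 = B2.card) (p q : ℤ)
    (hpq : ∀ w ∈ B', c s(x, w) = p ∧ c s(z, w) = q) :
    (∑ u ∈ insert y B1, (c s(z, u) - c s(x, u))) +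
      (∑ u ∈ B2, (c s(x, u) - c s(z, u))) = c s(z, y) - c s(x, y) + (p - q) := by
  have hB1sum : ∑ u ∈ B1, (c s(z, u) - c s(x, u)) = B1.card • (q - p) :=
    sum_eq_card_nsmul fun u hu => by rw [(hpq u (hB1 hu)).1, (hpq u (hB1 hu)).2]
  have hB2sum : ∑ u ∈ B2, (c s(x, u) - c s(z, u)) = B2.card • (p - q) :=
    sum_eq_card_nsmul fun u hu => by rw [(hpq u (hB2 hu)).1, (hpq u (hB2 hu)).2]
  rw [sum_insert fun hy => hyB' (hB1 hy), hB1sum, hB2sum, ← hcard]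
  simp only [nsmul_eq_mul]
  push_cast
  ring

theorem stmt17_general {V : Type*} [DecidableEq V]
    (c : Sym2 V → ℤ) (x z y : V) (B' B1 B2 : Finset V)
    (hyB' : y ∉ B') (hB1 : B1 ⊆ B') (hB2 : B2 ⊆ B')
    (hcard : B1.card + 1 = B2.card)
    (hval : ∀ w ∈ insert y B',
      (c s(x, w) = 1 ∨ c s(x, w) = -1) ∧ (c s(z, w) = 1 ∨ c s(z, w) = -1))
    (p q : ℤ) (hpq : ∀ w ∈ B', c s(x, w) = p ∧ c s(z, w) = q)
    (htype2 : |c s(x, y) + c s(y, z)| ≠ |p + q|) :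
    (∑ u ∈ insert y B1, (c s(z, u) - c s(x, u))) +
      (∑ u ∈ B2, (c s(x, u) - c s(z, u))) = 2 ∨
    (∑ u ∈ insert y B1, (c s(z, u) - c s(x, u))) +
      (∑ u ∈ B2, (c s(x, u) - c s(z, u))) = -2 := by
  obtain ⟨w, hw⟩ : B2.Nonempty := card_pos.mp (by omega)
  have hwB' : w ∈ B' := hB2 hw
  have hp : p = 1 ∨ p = -1 := (hpq w hwB').1 ▸ (hval w (mem_insert_of_mem hwB')).1
  have hq : q = 1 ∨ q = -1 := (hpq w hwB').2 ▸ (hval w (mem_insert_of_mem hwB')).2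
  have hzy : c s(z, y) = c s(y, z) := congrArg c Sym2.eq_swap
  obtain ⟨hxy, hyz⟩ := hval y (mem_insert_self y B')
  rw [exchange_sum_eq c x z y B' B1 B2 hyB' hB1 hB2 hcard p q hpq]
  rw [hzy] at hyz ⊢
  exact sub_add_sub_eq_two_or_eq_neg_two hxy hyz hp hq htype2

/-- In a type-2 copy of `K_{2,2Δ}` with parts `{x,z}` and `{y} ∪ B'` (all paths
`xwz`, `w ∈ B'`, coloured identically with colours `p, q`, and
`|c(xy)+c(yz)| ≠ |p+q|`), if a copy `H'` of `H` uses from this gadget only the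
edges from `x` to `{y} ∪ B₁` and from `z` to `B₂`, where `B₁, B₂ ⊆ B'` are
disjoint with `|{y} ∪ B₁| = |B₂|`, then exchanging the images of `x` and `z`
changes the colour sum by exactly `+2` or `-2`. -/
theorem stmt17 {V : Type*} [DecidableEq V] (G : SimpleGraph V)
    (c : Sym2 V → ℤ) (x z y : V) (B' B1 B2 : Finset V)
    (hxz : x ≠ z) (hxB : x ∉ insert y B') (hzB : z ∉ insert y B')
    (hyB' : y ∉ B') (hB1 : B1 ⊆ B') (hB2 : B2 ⊆ B') (hdisj : Disjoint B1 B2)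
    (hcard : B1.card + 1 = B2.card)
    (hedge : ∀ w ∈ insert y B', G.Adj x w ∧ G.Adj z w)
    (hval : ∀ w ∈ insert y B',
      (c s(x, w) = 1 ∨ c s(x, w) = -1) ∧ (c s(z, w) = 1 ∨ c s(z, w) = -1))
    (p q : ℤ) (hpq : ∀ w ∈ B', c s(x, w) = p ∧ c s(z, w) = q)
    (htype2 : |c s(x, y) + c s(y, z)| ≠ |p + q|) :
    (∑ u ∈ insert y B1, (c s(z, u) - c s(x, u))) +
      (∑ u ∈ B2, (c s(x, u) - c s(z, u))) = 2 ∨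
    (∑ u ∈ insert y B1, (c s(z, u) - c s(x, u))) +
      (∑ u ∈ B2, (c s(x, u) - c s(z, u))) = -2 :=
  stmt17_general c x z y B' B1 B2 hyB' hB1 hB2 hcard hval p q hpq htype2
end

section
/- Let r ≥ 2 and fix an r-colouring of the edges of K_n in which some colour i appears on m_i ≥ (1/r)·C(n,2) edges. If, moreover, there is no 4-cycle in K_n containing exactly two edges of colour i that are opposite to each other and at least one edge of a different colour, then either all edges in colour i form a clique, or all edges in colour i share a common vertex. -/
/-!
The colour-`i` edges form a graph in which any two disjoint edges `ab`, `cd` are joined by `ac`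
(otherwise `b a c d` is a forbidden 4-cycle). In such a graph two non-adjacent vertices `u`, `v`
that are not isolated must have one and the same neighbour `y`, and it is their only neighbour.
Every edge `pq` avoiding `y` would then be disjoint from `uy` and force `p` to be a second
neighbour of `u`, so all edges pass through `y`.
-/

namespace SimpleGraph

variable {V : Type*} (G : SimpleGraph V)

def DisjointEdgesJoined : Prop :=
  ∀ a b c d : V, a ≠ c → a ≠ d → b ≠ c → b ≠ d → G.Adj a b → G.Adj c d → G.Adj a c

variable {G}

theorem DisjointEdgesJoined.neighbour_eq_of_not_adj (hG : G.DisjointEdgesJoined) {u v y z : V}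
    (huv : u ≠ v) (hnadj : ¬G.Adj u v) (huy : G.Adj u y) (hvz : G.Adj v z) : y = z := by
  by_contra hyz
  have hzu : z ≠ u := by rintro rfl; exact hnadj hvz.symm
  have hyv : y ≠ v := by rintro rfl; exact hnadj huy
  exact hnadj (hG u y v z huv hzu.symm hyv hyz huy hvz)

theorem DisjointEdgesJoined.mem_edge_of_unique_neighbour (hG : G.DisjointEdgesJoined)
    {u y p q : V} (huy : G.Adj u y) (hunique : ∀ w, G.Adj u w → w = y) (hpq : G.Adj p q) :
    y = p ∨ y = q := by
  by_contra! hy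
  obtain ⟨hyp, hyq⟩ := hy
  rcases eq_or_ne p u with rfl | hpu
  · exact hyq (hunique q hpq).symm
  rcases eq_or_ne q u with rfl | hqu
  · exact hyp (hunique p hpq.symm).symm
  exact hyp (hunique p (hG p q u y hpu (Ne.symm hyp) hqu (Ne.symm hyq) hpq huy).symm).symm

theorem DisjointEdgesJoined.clique_or_star (hG : G.DisjointEdgesJoined) :
    (∀ u v : V, (∃ y, G.Adj u y) → (∃ y, G.Adj v y) → u ≠ v → G.Adj u v) ∨
    ∃ x : V, ∀ u v : V, G.Adj u v → x = u ∨ x = v := by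
  by_cases hclique : ∀ u v : V, (∃ y, G.Adj u y) → (∃ y, G.Adj v y) → u ≠ v → G.Adj u v
  · exact Or.inl hclique
  push Not at hclique
  obtain ⟨u, v, ⟨y, huy⟩, ⟨z, hvz⟩, huv, hnadj⟩ := hclique
  have hunique : ∀ w, G.Adj u w → w = y := fun w huw =>
    (hG.neighbour_eq_of_not_adj huv hnadj huw hvz).trans
      (hG.neighbour_eq_of_not_adj huv hnadj huy hvz).symm
  exact Or.inr ⟨y, fun p q hpq => hG.mem_edge_of_unique_neighbour huy hunique hpq⟩

end SimpleGraph

theorem stmt19_general (n r : ℕ) (col : Sym2 (Fin n) → Fin r) (i : Fin r)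
    (hno4 : ¬∃ a b c d : Fin n,
      a ≠ b ∧ b ≠ c ∧ c ≠ d ∧ d ≠ a ∧ a ≠ c ∧ b ≠ d ∧
      col s(a, b) = i ∧ col s(c, d) = i ∧
      (col s(b, c) ≠ i ∨ col s(d, a) ≠ i)) :
    (∀ u v : Fin n, (∃ y, y ≠ u ∧ col s(u, y) = i) →
      (∃ y, y ≠ v ∧ col s(v, y) = i) → u ≠ v → col s(u, v) = i) ∨
    (∃ x : Fin n, ∀ u v : Fin n, u ≠ v → col s(u, v) = i → x = u ∨ x = v) := by
  set G := SimpleGraph.fromEdgeSet {e : Sym2 (Fin n) | col e = i}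
  have hadj : ∀ u v, G.Adj u v ↔ col s(u, v) = i ∧ u ≠ v := fun _ _ =>
    SimpleGraph.fromEdgeSet_adj _
  have hG : G.DisjointEdgesJoined := by
    intro a b c d hac had hbc hbd hab hcd
    rw [hadj] at hab hcd ⊢
    exact ⟨by_contra fun hne => hno4 ⟨b, a, c, d, hab.2.symm, hac, hcd.2, hbd.symm, hbc, had,
      by rw [Sym2.eq_swap]; exact hab.1, hcd.1, Or.inl hne⟩, hac⟩
  rcases hG.clique_or_star with hclique | ⟨x, hx⟩
  · refine Or.inl fun u v ⟨y, hyu, huy⟩ ⟨z, hzv, hvz⟩ huv => ?_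
    exact ((hadj u v).1 (hclique u v ⟨y, (hadj u y).2 ⟨huy, hyu.symm⟩⟩
      ⟨z, (hadj v z).2 ⟨hvz, hzv.symm⟩⟩ huv)).1
  · exact Or.inr ⟨x, fun u v huv huvi => hx u v ((hadj u v).2 ⟨huvi, huv⟩)⟩

/-- Let `r ≥ 2` and fix an `r`-colouring of the edges of `K_n` in which colour
`i` appears on at least `C(n,2)/r` edges. If there is no 4-cycle containing two
opposite edges of colour `i` and at least one edge of a different colour, then
either the edges of colour `i` form a clique, or they all share a common
vertex. -/
theorem stmt19 (n r : ℕ) (hr : 2 ≤ r) (col : Sym2 (Fin n) → Fin r) (i : Fin r)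
    (hmi : n.choose 2 ≤ r * {e : Sym2 (Fin n) | ¬e.IsDiag ∧ col e = i}.ncard)
    (hno4 : ¬∃ a b c d : Fin n,
      a ≠ b ∧ b ≠ c ∧ c ≠ d ∧ d ≠ a ∧ a ≠ c ∧ b ≠ d ∧
      col s(a, b) = i ∧ col s(c, d) = i ∧
      (col s(b, c) ≠ i ∨ col s(d, a) ≠ i)) :
    (∀ u v : Fin n, (∃ y, y ≠ u ∧ col s(u, y) = i) →
      (∃ y, y ≠ v ∧ col s(v, y) = i) → u ≠ v → col s(u, v) = i) ∨
    (∃ x : Fin n, ∀ u v : Fin n, u ≠ v → col s(u, v) = i → x = u ∨ x = v) :=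
  stmt19_general n r col i hno4
end
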